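/- arXiv:2308.09563 — 13 statements merged into one kernel-verified Lean document; each statement's English description precedes it below -/
import Mathlib

section
/- Let n ≥ 1, let a be a nonzero real number, x₀ ∈ ℝⁿ and C ∈ ℝ. Define u : ℝⁿ × (0,∞) → ℝ by u(x,t) = exp( −a·‖x − x₀‖²/(4(1 − e^{−a t})) − (n/2)·e^{a t}·ln|1 − e^{−a t}| + C·e^{a t} ). Then u is positive, solves ∂ₜu = Δₓu + a·u·ln u on ℝⁿ × (0,∞), and satisfies the equality Δₓ(ln u(·,t))(x) = −n·a/(2·(1 − e^{−a t})) for all x ∈ ℝⁿ and t > 0; in particular the differential Harnack inequality Δₓ(ln u) + n·a/(2(1 − e^{−a t})) ≥ 0 holds with equality for this family of solutions. -/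
/-- The Laplacian of a function on Euclidean space: the sum of its second
partial derivatives (the trace of its second derivative). -/
noncomputable def laplacian {n : ℕ} (v : EuclideanSpace ℝ (Fin n) → ℝ)
    (x : EuclideanSpace ℝ (Fin n)) : ℝ :=
  ∑ i : Fin n, fderiv ℝ (fun y => fderiv ℝ v y (EuclideanSpace.single i 1)) x
    (EuclideanSpace.single i 1)

variable {n : ℕ}
local notation "E" => EuclideanSpace ℝ (Fin n)

lemma hF (c d : ℝ) (x₀ y : E) :
    HasFDerivAt (fun y : E => c * ‖y - x₀‖^2 + d)
      (c • ((fderivInnerCLM ℝ ((y - x₀ : E), (y - x₀ : E))).comp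
        ((ContinuousLinearMap.id ℝ E).prod (ContinuousLinearMap.id ℝ E)))) y := by
  have h1 : HasFDerivAt (fun y : E => y - x₀) (ContinuousLinearMap.id ℝ E) y :=
    (hasFDerivAt_id y).sub_const x₀
  have h2 := (h1.inner ℝ h1).const_mul c
  have := h2.add_const d
  simp only [real_inner_self_eq_norm_sq] at this
  convert this using 1

lemma inner_dir (x₀ y : E) (i : Fin n) :
    ((fderivInnerCLM ℝ ((y - x₀ : E), (y - x₀ : E))).comp
      ((ContinuousLinearMap.id ℝ E).prod (ContinuousLinearMap.id ℝ E)))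
      (EuclideanSpace.single i 1) = 2 * (y i - x₀ i) := by
  simp [fderivInnerCLM_apply, EuclideanSpace.inner_single_left,
    EuclideanSpace.inner_single_right, real_inner_comm]
  ring

lemma hF_dir (c d : ℝ) (x₀ : E) (y : E) (i : Fin n) :
    fderiv ℝ (fun y : E => c * ‖y - x₀‖^2 + d) y (EuclideanSpace.single i 1)
      = 2 * c * (y i - x₀ i) := by
  rw [(hF c d x₀ y).fderiv]
  simp [fderivInnerCLM_apply, EuclideanSpace.inner_single_left,
    EuclideanSpace.inner_single_right, real_inner_comm]
  ring

lemma hcoord (c e : ℝ) (x : E) (i : Fin n) :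
    HasFDerivAt (fun y : E => c * (y i - e)) (c • (EuclideanSpace.proj i : E →L[ℝ] ℝ)) x := by
  have h : HasFDerivAt (fun y : E => y i) (EuclideanSpace.proj i : E →L[ℝ] ℝ) x :=
    (EuclideanSpace.proj i : E →L[ℝ] ℝ).hasFDerivAt
  simpa [mul_sub] using ((h.sub_const e).const_mul c)

lemma norm_sq_sum (x₀ x : E) : ‖x - x₀‖^2 = ∑ i, (x i - x₀ i)^2 := by
  rw [EuclideanSpace.norm_eq, Real.sq_sqrt (by positivity)]
  simp [sq_abs]

lemma lap_affine (c d : ℝ) (x₀ x : E) :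
    laplacian (fun y : E => c * ‖y - x₀‖^2 + d) x = 2 * c * n := by
  unfold laplacian
  have : ∀ i : Fin n, fderiv ℝ (fun y : E =>
      fderiv ℝ (fun y : E => c * ‖y - x₀‖^2 + d) y (EuclideanSpace.single i 1)) x
      (EuclideanSpace.single i 1) = 2 * c := by
    intro i
    have : (fun y : E => fderiv ℝ (fun y : E => c * ‖y - x₀‖^2 + d) y
        (EuclideanSpace.single i 1)) = fun y : E => (2*c) * (y i - x₀ i) := by
      funext y; exact hF_dir c d x₀ y i
    rw [this, (hcoord (2*c) (x₀ i) x i).fderiv]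
    simp [EuclideanSpace.single_apply]
  rw [Finset.sum_congr rfl (fun i _ => this i)]
  simp [mul_comm]

lemma lap_exp (c d : ℝ) (x₀ x : E) :
    laplacian (fun y : E => Real.exp (c * ‖y - x₀‖^2 + d)) x
      = Real.exp (c * ‖x - x₀‖^2 + d) * (4*c^2*‖x - x₀‖^2 + 2*c*n) := by
  unfold laplacian
  have key : ∀ y : E, ∀ i : Fin n,
      fderiv ℝ (fun y : E => Real.exp (c * ‖y - x₀‖^2 + d)) y (EuclideanSpace.single i 1)
      = Real.exp (c * ‖y - x₀‖^2 + d) * (2 * c * (y i - x₀ i)) := by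
    intro y i
    have h := (hF c d x₀ y).exp
    rw [h.fderiv]
    simp only [ContinuousLinearMap.coe_smul', Pi.smul_apply, smul_eq_mul]
    rw [inner_dir x₀ y i]
    ring
  have step : ∀ i : Fin n,
      fderiv ℝ (fun y : E => fderiv ℝ (fun y : E => Real.exp (c * ‖y - x₀‖^2 + d)) y
        (EuclideanSpace.single i 1)) x (EuclideanSpace.single i 1)
      = Real.exp (c * ‖x - x₀‖^2 + d) * ((2*c*(x i - x₀ i))^2 + 2*c) := by
    intro i
    have heq : (fun y : E => fderiv ℝ (fun y : E => Real.exp (c * ‖y - x₀‖^2 + d)) y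
        (EuclideanSpace.single i 1))
        = fun y : E => Real.exp (c * ‖y - x₀‖^2 + d) * (2 * c * (y i - x₀ i)) := by
      funext y; exact key y i
    rw [heq]
    have h1 : HasFDerivAt (fun y : E => Real.exp (c * ‖y - x₀‖^2 + d))
        (Real.exp (c * ‖x - x₀‖^2 + d) • (c • ((fderivInnerCLM ℝ ((x - x₀ : E), (x - x₀ : E))).comp
        ((ContinuousLinearMap.id ℝ E).prod (ContinuousLinearMap.id ℝ E))))) x := (hF c d x₀ x).exp
    have h2 := hcoord (2*c) (x₀ i) x i
    have : HasFDerivAt (fun y : E => Real.exp (c * ‖y - x₀‖^2 + d) * (2 * c * (y i - x₀ i))) _ x :=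
      h1.mul h2
    rw [this.fderiv]
    simp only [ContinuousLinearMap.add_apply, ContinuousLinearMap.coe_smul', Pi.smul_apply,
      smul_eq_mul]
    have e2 : ((EuclideanSpace.proj i : E →L[ℝ] ℝ) (EuclideanSpace.single i 1) : ℝ) = 1 := by
      simp [EuclideanSpace.single_apply]
    rw [inner_dir x₀ x i, e2]
    ring
  rw [Finset.sum_congr rfl (fun i _ => step i)]
  rw [← Finset.mul_sum, Finset.sum_add_distrib]
  simp only [Finset.sum_const, Finset.card_univ, Fintype.card_fin, nsmul_eq_mul]
  rw [show ∑ i : Fin n, (2*c*(x i - x₀ i))^2 = 4*c^2 * ∑ i, (x i - x₀ i)^2 from by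
    rw [Finset.mul_sum]; congr 1; funext i; ring]
  rw [← norm_sq_sum]
  ring

/-- The explicit family
`u(x,t) = exp(-a‖x-x₀‖²/(4(1-e^{-at})) - (n/2) e^{at} ln|1-e^{-at}| + C e^{at})`
is a family of positive solutions of `∂ₜu = Δu + a u ln u` on `ℝⁿ × (0,∞)` which
attains equality in the sharp differential Harnack inequality
`Δ(ln u) + n a/(2(1-e^{-at})) ≥ 0`. -/
theorem stmt_1 (n : ℕ) (hn : 1 ≤ n) (a : ℝ) (ha : a ≠ 0)
    (x₀ : EuclideanSpace ℝ (Fin n)) (C : ℝ)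
    (u : EuclideanSpace ℝ (Fin n) → ℝ → ℝ)
    (hu : ∀ x t, u x t =
      Real.exp (-(a * ‖x - x₀‖ ^ 2) / (4 * (1 - Real.exp (-a * t)))
        - (n / 2) * Real.exp (a * t) * Real.log |1 - Real.exp (-a * t)|
        + C * Real.exp (a * t))) :
    (∀ x t, 0 < t → 0 < u x t) ∧
    (∀ x t, 0 < t →
      deriv (u x) t = laplacian (fun y => u y t) x + a * u x t * Real.log (u x t)) ∧
    (∀ x t, 0 < t →
      laplacian (fun y => Real.log (u y t)) x
        = -(n * a) / (2 * (1 - Real.exp (-a * t)))) := by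
  have hbne : ∀ t : ℝ, 0 < t → (1 - Real.exp (-a * t)) ≠ 0 := by
    intro t ht
    refine sub_ne_zero.mpr fun h => ?_
    have h2 : -a * t = 0 := (Real.exp_eq_one_iff _).mp h.symm
    rcases mul_eq_zero.mp h2 with h' | h'
    · exact ha (neg_eq_zero.mp h')
    · exact ht.ne' h'
  refine ⟨fun x t ht => by rw [hu]; exact Real.exp_pos _, ?_, ?_⟩
  · intro x t ht
    set r : ℝ := ‖x - x₀‖ ^ 2 with hr
    set b : ℝ := 1 - Real.exp (-a * t) with hbdef
    have hb0 : b ≠ 0 := hbne t ht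
    set Ee : ℝ := Real.exp (a * t) with hEdef
    have hE0 : Ee ≠ 0 := Real.exp_ne_zero _
    have hs : Real.exp (-a * t) = Ee⁻¹ := by
      rw [hEdef, ← Real.exp_neg]; ring_nf
    set L : ℝ := Real.log b with hL
    set c : ℝ := -a / (4 * b) with hc
    set d : ℝ := -((n : ℝ) / 2) * Ee * L + C * Ee with hd
    -- derivative of b in τ
    have hb : HasDerivAt (fun τ : ℝ => 1 - Real.exp (-a * τ)) (a * Real.exp (-a * t)) t := by
      have h1 : HasDerivAt (fun τ : ℝ => -a * τ) (-a) t := by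
        simpa using (hasDerivAt_id t).const_mul (-a)
      have h2 := h1.exp
      have h3 := h2.const_sub 1
      exact h3.congr_deriv (by ring)
    have hlog : HasDerivAt (fun τ : ℝ => Real.log (1 - Real.exp (-a * τ)))
        ((a * Real.exp (-a * t)) / b) t := hb.log hb0
    have hinv : HasDerivAt (fun τ : ℝ => (1 - Real.exp (-a * τ))⁻¹)
        (-(a * Real.exp (-a * t)) / b ^ 2) t := hb.inv hb0
    have hAτ : HasDerivAt (fun τ : ℝ => a * τ) a t := by
      simpa using (hasDerivAt_id t).const_mul a
    have hEexp : HasDerivAt (fun τ : ℝ => Real.exp (a * τ)) (Ee * a) t := by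
      simpa [hEdef] using hAτ.exp
    -- ψ and its derivative
    have hψ : HasDerivAt (fun τ : ℝ =>
        (-(a * r) / 4) * (1 - Real.exp (-a * τ))⁻¹
          + (-((n : ℝ) / 2)) * (Real.exp (a * τ) * Real.log (1 - Real.exp (-a * τ)))
          + C * Real.exp (a * τ))
        ((-(a * r) / 4) * (-(a * Real.exp (-a * t)) / b ^ 2)
          + (-((n : ℝ) / 2)) * (Ee * a * L + Ee * ((a * Real.exp (-a * t)) / b))
          + C * (Ee * a)) t := by
      exact ((hinv.const_mul (-(a * r) / 4)).add
        ((hEexp.mul hlog).const_mul (-((n : ℝ) / 2)))).add (hEexp.const_mul C)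
    have hux : u x = fun τ : ℝ => Real.exp (
        (-(a * r) / 4) * (1 - Real.exp (-a * τ))⁻¹
          + (-((n : ℝ) / 2)) * (Real.exp (a * τ) * Real.log (1 - Real.exp (-a * τ)))
          + C * Real.exp (a * τ)) := by
      funext τ
      rw [hu x τ, Real.log_abs]
      congr 1
      simp only [div_eq_mul_inv, mul_inv]
      ring
    have hderiv : deriv (u x) t = Real.exp ((-(a * r) / 4) * b⁻¹
          + (-((n : ℝ) / 2)) * (Ee * L) + C * Ee)
        * ((-(a * r) / 4) * (-(a * Real.exp (-a * t)) / b ^ 2)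
          + (-((n : ℝ) / 2)) * (Ee * a * L + Ee * ((a * Real.exp (-a * t)) / b))
          + C * (Ee * a)) := by
      rw [hux, (hψ.exp).deriv]
    -- spatial side
    have huyt : (fun y => u y t) = fun y : EuclideanSpace ℝ (Fin n) =>
        Real.exp (c * ‖y - x₀‖ ^ 2 + d) := by
      funext y
      rw [hu y t, Real.log_abs]
      congr 1
      rw [hc, hd, ← hbdef, ← hEdef, ← hL]
      field_simp [hb0]
      ring
    have hlap := lap_exp c d x₀ x
    have hulog : Real.log (u x t) = c * r + d := by
      rw [hu x t, Real.log_exp, Real.log_abs, hc, hd, ← hbdef, ← hEdef, ← hL, ← hr]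
      field_simp [hb0]
      ring
    have huxt : u x t = Real.exp (c * r + d) := by
      rw [hu x t]; rw [← hulog, hu x t, Real.exp_log (Real.exp_pos _)]
    rw [hderiv, huyt, hlap, hulog, huxt, ← hr]
    have hexp_eq : Real.exp ((-(a * r) / 4) * b⁻¹ + (-((n : ℝ) / 2)) * (Ee * L) + C * Ee)
        = Real.exp (c * r + d) := by
      congr 1
      rw [hc, hd]
      field_simp [hb0]
      ring
    rw [hexp_eq]
    have hb' : b = 1 - Ee⁻¹ := by rw [hbdef, hs]
    have h1 : (1 : ℝ) - Ee⁻¹ ≠ 0 := by rw [← hb']; exact hb0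
    have key : (-(a * r) / 4) * (-(a * Real.exp (-a * t)) / b ^ 2)
          + (-((n : ℝ) / 2)) * (Ee * a * L + Ee * ((a * Real.exp (-a * t)) / b))
          + C * (Ee * a)
        = 4 * c ^ 2 * r + 2 * c * n + a * (c * r + d) := by
      have hEm1 : Ee - 1 ≠ 0 := by
        intro h
        apply h1
        rw [sub_eq_zero] at h
        rw [h]
        norm_num
      have h2 : (1 : ℝ) - Ee⁻¹ = (Ee - 1) / Ee := by field_simp
      rw [hs, hc, hd, hb', h2]
      field_simp
      ring
    rw [key]
    ring
  · intro x t ht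
    set b : ℝ := 1 - Real.exp (-a * t) with hbdef
    have hb0 : b ≠ 0 := hbne t ht
    set c : ℝ := -a / (4 * b) with hc
    set d : ℝ := -((n : ℝ) / 2) * Real.exp (a * t) * Real.log b + C * Real.exp (a * t) with hd
    have huyt : (fun y => Real.log (u y t)) = fun y : EuclideanSpace ℝ (Fin n) =>
        c * ‖y - x₀‖ ^ 2 + d := by
      funext y
      rw [hu y t, Real.log_exp, Real.log_abs, hc, hd, ← hbdef]
      field_simp [hb0]
      ring
    rw [huyt, lap_affine]
    rw [hc]
    field_simp [hb0]
    ring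
end

section
/- Let E be a real inner product space, a ∈ ℝ, and let γ, α : (0,∞) → (0,∞) and φ : (0,∞) → ℝ be continuous functions. Let f : E × (0,∞) → ℝ be differentiable and suppose that for all x ∈ E, t > 0: γ(t)·‖∇ₓf(x,t)‖² − α(t)·∂ₜf(x,t) + α(t)·a·f(x,t) − φ(t) ≤ 0. Then for any x₁, x₂ ∈ E, any 0 < t₁ < t₂, and any continuously differentiable path l : [t₁,t₂] → E with l(t₁) = x₁ and l(t₂) = x₂, one has e^{−a t₂}·f(x₂,t₂) − e^{−a t₁}·f(x₁,t₁) ≥ ∫_{t₁}^{t₂} e^{−a t}·( −φ(t)/α(t) − (α(t)/(4γ(t)))·‖l′(t)‖² ) dt. -/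

private lemma stmt_2_aux {g0 a0 p0 c0 F N n P Q : ℝ} (hg : 0 < g0) (ha : 0 < a0)
    (harn : g0 * N ^ 2 - a0 * Q + a0 * c0 * F - p0 ≤ 0) (hP : -(N * n) ≤ P) :
    -p0 / a0 - a0 / (4 * g0) * n ^ 2 ≤ P + Q - c0 * F := by
  have h1 : g0 / a0 * N ^ 2 - p0 / a0 ≤ Q - c0 * F := by
    rw [div_mul_eq_mul_div, ← sub_div, div_le_iff₀ ha]
    nlinarith
  have hineq : 0 ≤ g0 / a0 * N ^ 2 - N * n + a0 / (4 * g0) * n ^ 2 := by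
    have h4 : g0 / a0 * N ^ 2 - N * n + a0 / (4 * g0) * n ^ 2
        = (2 * g0 * N - a0 * n) ^ 2 / (4 * g0 * a0) := by
      field_simp
      ring
    rw [h4]; positivity
  have hnd : -p0 / a0 = -(p0 / a0) := neg_div _ _
  rw [hnd]
  linarith

set_option maxHeartbeats 1000000 in
/-- Harnack inequality derived from a differential Harnack inequality for the
logarithmic equation: if `γ(t)‖∇ₓf‖² - α(t)∂ₜf + α(t)·a·f - φ(t) ≤ 0` on
`E × (0,∞)`, then for any `C¹` path `l` joining `x₁` to `x₂`,
`e^{-a t₂} f(x₂,t₂) - e^{-a t₁} f(x₁,t₁)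
  ≥ ∫_{t₁}^{t₂} e^{-a t}(-φ/α - (α/(4γ))‖l'‖²) dt`. -/
theorem stmt_2 {E : Type*} [NormedAddCommGroup E] [InnerProductSpace ℝ E]
    (a : ℝ) (γ α φ : ℝ → ℝ)
    (hγpos : ∀ t, 0 < t → 0 < γ t) (hαpos : ∀ t, 0 < t → 0 < α t)
    (hγc : ContinuousOn γ (Set.Ioi 0)) (hαc : ContinuousOn α (Set.Ioi 0))
    (hφc : ContinuousOn φ (Set.Ioi 0))
    (f : E × ℝ → ℝ)
    (hf : ∀ (x : E) (t : ℝ), 0 < t → DifferentiableAt ℝ f (x, t))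
    (hharnack : ∀ (x : E) (t : ℝ), 0 < t →
      γ t * ‖fderiv ℝ (fun y => f (y, t)) x‖ ^ 2
        - α t * deriv (fun s => f (x, s)) t + α t * a * f (x, t) - φ t ≤ 0)
    (x₁ x₂ : E) (t₁ t₂ : ℝ) (ht₁ : 0 < t₁) (ht : t₁ < t₂)
    (l : ℝ → E) (hl : ContDiff ℝ 1 l) (hl₁ : l t₁ = x₁) (hl₂ : l t₂ = x₂) :
    Real.exp (-a * t₂) * f (x₂, t₂) - Real.exp (-a * t₁) * f (x₁, t₁) ≥
      ∫ t in t₁..t₂, Real.exp (-a * t) *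
        (-(φ t) / α t - (α t / (4 * γ t)) * ‖deriv l t‖ ^ 2) := by
  subst hl₁ hl₂
  have hld : Differentiable ℝ l := hl.differentiable one_ne_zero
  have hl' : Continuous (deriv l) := hl.continuous_deriv le_rfl
  set g : ℝ → ℝ := fun t => Real.exp (-a * t) * f (l t, t) with hgdef
  set h : ℝ → ℝ := fun t => Real.exp (-a * t) *
      (-(φ t) / α t - (α t / (4 * γ t)) * ‖deriv l t‖ ^ 2) with hhdef
  -- continuity of h on (0,∞)
  have hexpc : Continuous fun t : ℝ => Real.exp (-a * t) := by fun_prop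
  have hhc : ContinuousOn h (Set.Ioi 0) := by
    apply hexpc.continuousOn.mul
    apply ContinuousOn.sub
    · exact (hφc.neg.div hαc fun t htp => (hαpos t htp).ne')
    · exact (hαc.div (continuousOn_const.mul hγc)
        fun t htp => mul_ne_zero (by norm_num) (hγpos t htp).ne').mul
        ((hl'.norm.pow 2).continuousOn)
  have hhat : ∀ t ∈ Set.Ioi 0, ContinuousAt h t := fun t htp =>
    hhc.continuousAt (isOpen_Ioi.mem_nhds htp)
  -- derivative of g
  have hgd : ∀ t ∈ Set.Ioi 0, HasDerivAt g
      (Real.exp (-a * t) * (fderiv ℝ f (l t, t) (deriv l t, 1) - a * f (l t, t))) t := by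
    intro t htp
    have h1 : HasDerivAt (fun s : ℝ => -a * s) (-a) t := by
      simpa using (hasDerivAt_id t).const_mul (-a)
    have hexp : HasDerivAt (fun s => Real.exp (-a * s)) (Real.exp (-a * t) * (-a)) t := h1.exp
    have hpath : HasDerivAt (fun s => (l s, s)) (deriv l t, 1) t :=
      (hld t).hasDerivAt.prodMk (hasDerivAt_id t)
    have hcomp : HasDerivAt (fun s => f (l s, s)) (fderiv ℝ f (l t, t) (deriv l t, 1)) t :=
      HasFDerivAt.comp_hasDerivAt (f := fun s => (l s, s)) t (hf (l t) t htp).hasFDerivAt hpath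
    have := hexp.mul hcomp
    convert this using 1
    exacts [rfl, rfl, rfl, by ring]
  -- lower bound on the derivative of g
  have hbound : ∀ t ∈ Set.Ioi 0,
      h t ≤ Real.exp (-a * t) * (fderiv ℝ f (l t, t) (deriv l t, 1) - a * f (l t, t)) := by
    intro t htp
    set L := fderiv ℝ f (l t, t) with hL
    set J := (ContinuousLinearMap.id ℝ E).prod (0 : E →L[ℝ] ℝ) with hJ
    have hFx : HasFDerivAt (fun y => f (y, t)) (L.comp J) (l t) := by
      have hJd : HasFDerivAt (fun y : E => (y, t)) J (l t) :=
        (hasFDerivAt_id (l t)).prodMk (hasFDerivAt_const t (l t))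
      exact (hf (l t) t htp).hasFDerivAt.comp (l t) hJd
    have hfx : fderiv ℝ (fun y => f (y, t)) (l t) = L.comp J := hFx.fderiv
    have hFt : HasDerivAt (fun s => f (l t, s)) (L (0, 1)) t := by
      have hp : HasDerivAt (fun s : ℝ => ((l t : E), s)) ((0 : E), (1 : ℝ)) t :=
        (hasDerivAt_const t (l t)).prodMk (hasDerivAt_id t)
      exact (hf (l t) t htp).hasFDerivAt.comp_hasDerivAt t hp
    have hft : deriv (fun s => f (l t, s)) t = L (0, 1) := hFt.deriv
    have harn := hharnack (l t) t htp
    rw [hfx, hft] at harn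
    set N := ‖L.comp J‖ with hN
    set n := ‖deriv l t‖ with hn
    set P := (L.comp J) (deriv l t) with hP
    set Q := L (0, 1) with hQ
    have hγt := hγpos t htp
    have hαt := hαpos t htp
    have hLsplit : L (deriv l t, 1) = P + Q := by
      have he : ((deriv l t, (1 : ℝ)) : E × ℝ) = (deriv l t, 0) + (0, 1) := by simp
      rw [he, map_add]
      simp [hP, hQ, hJ, ContinuousLinearMap.comp_apply]
    have hop : |P| ≤ N * n := by
      have := (L.comp J).le_opNorm (deriv l t)
      rwa [Real.norm_eq_abs] at this
    have h2' : -(N * n) ≤ P := (abs_le.mp hop).1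
    have hmain : -(φ t) / α t - α t / (4 * γ t) * n ^ 2 ≤ P + Q - a * f (l t, t) :=
      stmt_2_aux hγt hαt harn h2'
    have hexpos : (0 : ℝ) < Real.exp (-a * t) := Real.exp_pos _
    rw [hhdef]
    apply mul_le_mul_of_nonneg_left _ hexpos.le
    rw [hLsplit]
    linarith
  -- primitive of h
  have huIcc : ∀ t : ℝ, 0 < t → Set.uIcc t₁ t ⊆ Set.Ioi 0 := by
    intro t htp x hx
    rcases Set.mem_uIcc.mp hx with ⟨h1, _⟩ | ⟨h1, _⟩ <;> simp only [Set.mem_Ioi] <;> linarith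
  have hint : ∀ t : ℝ, 0 < t → IntervalIntegrable h MeasureTheory.volume t₁ t :=
    fun t htp => (hhc.mono (huIcc t htp)).intervalIntegrable
  have hprim : ∀ t ∈ Set.Ioi 0, HasDerivAt (fun x => ∫ s in t₁..x, h s) (h t) t := by
    intro t htp
    exact intervalIntegral.integral_hasDerivAt_right (hint t htp)
      (hhc.stronglyMeasurableAtFilter isOpen_Ioi t htp) (hhat t htp)
  set G : ℝ → ℝ := fun t => g t - ∫ s in t₁..t, h s with hGdef
  have hGd : ∀ t ∈ Set.Ioi 0, HasDerivAt G
      (Real.exp (-a * t) * (fderiv ℝ f (l t, t) (deriv l t, 1) - a * f (l t, t)) - h t) t :=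
    fun t htp => (hgd t htp).sub (hprim t htp)
  have hmono : MonotoneOn G (Set.Icc t₁ t₂) := by
    apply monotoneOn_of_deriv_nonneg (convex_Icc t₁ t₂)
    · intro t htm
      exact ((hGd t (lt_of_lt_of_le ht₁ htm.1)).continuousAt).continuousWithinAt
    · intro t htm
      rw [interior_Icc] at htm
      exact (hGd t (ht₁.trans htm.1)).differentiableAt.differentiableWithinAt
    · intro t htm
      rw [interior_Icc] at htm
      have htp : (0 : ℝ) < t := ht₁.trans htm.1
      rw [(hGd t htp).deriv]
      have := hbound t htp
      linarith
  have hfin := hmono (Set.left_mem_Icc.mpr ht.le) (Set.right_mem_Icc.mpr ht.le) ht.le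
  simp only [hGdef, intervalIntegral.integral_same, sub_zero] at hfin
  rw [ge_iff_le]
  calc (∫ t in t₁..t₂, Real.exp (-a * t) *
        (-(φ t) / α t - (α t / (4 * γ t)) * ‖deriv l t‖ ^ 2))
      = ∫ s in t₁..t₂, h s := by rfl
    _ ≤ g t₂ - g t₁ := by linarith
end

section
/- Let E be a real inner product space, let a be a nonzero real number, let γ, α be positive real constants, and let φ : (0,∞) → ℝ be continuous. Let f : E × (0,∞) → ℝ be differentiable and suppose that for all x ∈ E, t > 0: γ·‖∇ₓf(x,t)‖² − α·∂ₜf(x,t) + α·a·f(x,t) − φ(t) ≤ 0. Then for any x₁, x₂ ∈ E and any 0 < t₁ < t₂, one has e^{−a t₂}·f(x₂,t₂) − e^{−a t₁}·f(x₁,t₁) ≥ −(1/α)·∫_{t₁}^{t₂} e^{−a t}·φ(t) dt − (α/(4γ))·a·‖x₁ − x₂‖²/(e^{a t₂} − e^{a t₁}). -/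
open Set intervalIntegral

set_option maxHeartbeats 1000000

/-- Harnack inequality (2.8) for the logarithmic equation in the Euclidean
setting, with constant coefficients `γ, α`:
`e^{-a t₂} f(x₂,t₂) - e^{-a t₁} f(x₁,t₁)
  ≥ -(1/α)∫_{t₁}^{t₂} e^{-a t} φ(t) dt - (α/(4γ)) a ‖x₁-x₂‖²/(e^{a t₂}-e^{a t₁})`. -/
theorem stmt_3 {E : Type*} [NormedAddCommGroup E] [InnerProductSpace ℝ E]
    (a : ℝ) (ha : a ≠ 0) (γ α : ℝ) (hγ : 0 < γ) (hα : 0 < α)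
    (φ : ℝ → ℝ) (hφc : ContinuousOn φ (Set.Ioi 0))
    (f : E × ℝ → ℝ)
    (hf : ∀ (x : E) (t : ℝ), 0 < t → DifferentiableAt ℝ f (x, t))
    (hharnack : ∀ (x : E) (t : ℝ), 0 < t →
      γ * ‖fderiv ℝ (fun y => f (y, t)) x‖ ^ 2
        - α * deriv (fun s => f (x, s)) t + α * a * f (x, t) - φ t ≤ 0)
    (x₁ x₂ : E) (t₁ t₂ : ℝ) (ht₁ : 0 < t₁) (ht : t₁ < t₂) :
    Real.exp (-a * t₂) * f (x₂, t₂) - Real.exp (-a * t₁) * f (x₁, t₁) ≥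
      -(1 / α) * (∫ t in t₁..t₂, Real.exp (-a * t) * φ t)
        - (α / (4 * γ)) * a * ‖x₁ - x₂‖ ^ 2
          / (Real.exp (a * t₂) - Real.exp (a * t₁)) := by
  set D : ℝ := Real.exp (a * t₂) - Real.exp (a * t₁) with hDdef
  have haD : 0 < a * D := by
    rcases lt_or_gt_of_ne ha with h | h
    · have h2 : Real.exp (a * t₂) < Real.exp (a * t₁) := Real.exp_lt_exp.2 (by nlinarith)
      have : D < 0 := by rw [hDdef]; linarith
      nlinarith
    · have h2 : Real.exp (a * t₁) < Real.exp (a * t₂) := Real.exp_lt_exp.2 (by nlinarith)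
      have : 0 < D := by rw [hDdef]; linarith
      nlinarith
  have hD : D ≠ 0 := by
    intro h; rw [h, mul_zero] at haD; exact lt_irrefl _ haD
  set Δ : E := x₂ - x₁ with hΔ
  set c : ℝ → E := fun t => x₁ + ((Real.exp (a * t) - Real.exp (a * t₁)) / D) • Δ with hcdef
  set c' : ℝ → E := fun t => ((a * Real.exp (a * t)) / D) • Δ with hc'def
  have hexpD : ∀ t : ℝ, HasDerivAt (fun s => Real.exp (a * s)) (a * Real.exp (a * t)) t := by
    intro t
    have h := (Real.hasDerivAt_exp (a * t)).comp t ((hasDerivAt_id t).const_mul a)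
    have h' : HasDerivAt (fun s => Real.exp (a * s)) (Real.exp (a * t) * (a * 1)) t := h
    convert h' using 1
    ring
  have hcderiv : ∀ t : ℝ, HasDerivAt c (c' t) t := by
    intro t
    exact ((((hexpD t).sub_const _).div_const D).smul_const Δ).const_add x₁
  have hc1 : c t₁ = x₁ := by simp [hcdef]
  have hc2 : c t₂ = x₂ := by
    simp only [hcdef, ← hDdef, div_self hD, one_smul, hΔ]
    abel
  have hccont : Continuous c := by
    apply continuous_const.add
    exact ((((Real.continuous_exp.comp (continuous_const.mul continuous_id)).sub
      continuous_const).div_const D).smul continuous_const)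
  set g : ℝ → ℝ := fun t => Real.exp (-a * t) * f (c t, t) with hgdef
  set g' : ℝ → ℝ := fun t =>
    Real.exp (-a * t) * ((fderiv ℝ f (c t, t)) (c' t, (1 : ℝ)) - a * f (c t, t)) with hg'def
  set ψ : ℝ → ℝ := fun t =>
    -(1 / α) * (Real.exp (-a * t) * φ t)
      - (α / (4 * γ)) * (Real.exp (-a * t) * ‖c' t‖ ^ 2) with hψdef
  have hexpN : ∀ t : ℝ, HasDerivAt (fun s => Real.exp (-a * s)) (-a * Real.exp (-a * t)) t := by
    intro t
    have h := (Real.hasDerivAt_exp (-a * t)).comp t ((hasDerivAt_id t).const_mul (-a))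
    have h' : HasDerivAt (fun s => Real.exp (-a * s)) (Real.exp (-a * t) * (-a * 1)) t := h
    convert h' using 1
    ring
  -- derivative of g
  have hgderiv : ∀ t : ℝ, 0 < t → HasDerivAt g (g' t) t := by
    intro t htpos
    have hF := (hf (c t) t htpos).hasFDerivAt
    have hpath : HasDerivAt (fun s => (c s, s)) (c' t, (1 : ℝ)) t :=
      (hcderiv t).prodMk (hasDerivAt_id t)
    have hcomp0 := hF.comp_hasDerivAt_of_eq t hpath rfl
    have hcomp : HasDerivAt (fun s => f (c s, s)) ((fderiv ℝ f (c t, t)) (c' t, (1 : ℝ))) t :=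
      hcomp0
    have := (hexpN t).mul hcomp
    refine this.congr_deriv ?_
    simp only [hg'def]; ring
  -- pointwise lower bound on g'
  have hψle : ∀ t : ℝ, 0 < t → ψ t ≤ g' t := by
    intro t htpos
    have hF := (hf (c t) t htpos).hasFDerivAt
    set F := fderiv ℝ f (c t, t) with hFdef
    set L : E →L[ℝ] ℝ := F.comp (ContinuousLinearMap.inl ℝ E ℝ) with hLdef
    have hx : fderiv ℝ (fun y => f (y, t)) (c t) = L :=
      (hF.comp (c t) (hasFDerivAt_prodMk_left (c t) t)).fderiv
    have htd : deriv (fun s => f (c t, s)) t = F ((0 : E), (1 : ℝ)) :=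
      (hF.comp_hasDerivAt t ((hasDerivAt_const t (c t)).prodMk (hasDerivAt_id t))).deriv
    have hHar := hharnack (c t) t htpos
    rw [hx, htd] at hHar
    set N : ℝ := ‖L‖ with hNdef
    set M : ℝ := ‖c' t‖ with hMdef
    set T : ℝ := F ((0 : E), (1 : ℝ)) with hTdef
    set P : ℝ := L (c' t) with hPdef
    set fv : ℝ := f (c t, t) with hfvdef
    have hsplit : F (c' t, (1 : ℝ)) = P + T := by
      have : (c' t, (1 : ℝ)) = ((c' t, (0 : ℝ)) : E × ℝ) + ((0 : E), (1 : ℝ)) := by simp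
      rw [this, map_add, hPdef, hLdef]
      simp
      rfl
    have hNM : -(N * M) ≤ P := by
      have h1 := L.le_opNorm (c' t)
      rw [Real.norm_eq_abs] at h1
      have h2 := neg_abs_le (L (c' t))
      rw [hNdef, hMdef, hPdef]; linarith
    have hT : γ * N ^ 2 + α * a * fv - φ t ≤ α * T := by linarith
    have hP4 : (4 * γ * α) * (-(N * M)) ≤ (4 * γ * α) * P :=
      mul_le_mul_of_nonneg_left hNM (by positivity)
    have hT4 : (4 * γ) * (γ * N ^ 2 + α * a * fv - φ t) ≤ (4 * γ) * (α * T) :=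
      mul_le_mul_of_nonneg_left hT (by positivity)
    have hgoal' : -(4 * γ) * φ t - α ^ 2 * M ^ 2 ≤ 4 * γ * α * (P + T - a * fv) := by
      nlinarith [sq_nonneg (2 * γ * N - α * M)]
    have hq : -(1 / α) * φ t - (α / (4 * γ)) * M ^ 2 ≤ P + T - a * fv := by
      have h4 : (0 : ℝ) < 4 * γ * α := by positivity
      rw [← mul_le_mul_iff_right₀ h4]
      have heq : 4 * γ * α * (-(1 / α) * φ t - (α / (4 * γ)) * M ^ 2)
          = -(4 * γ) * φ t - α ^ 2 * M ^ 2 := by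
        field_simp
      rw [heq]; linarith
    have hE : (0 : ℝ) < Real.exp (-a * t) := Real.exp_pos _
    have := mul_le_mul_of_nonneg_left hq hE.le
    calc ψ t = Real.exp (-a * t) * (-(1 / α) * φ t - (α / (4 * γ)) * M ^ 2) := by
          simp only [hψdef, hMdef]; ring
      _ ≤ Real.exp (-a * t) * (P + T - a * fv) := this
      _ = g' t := by rw [hg'def]; simp only [hsplit, hfvdef]; rw [← hFdef, hsplit]
  -- integral inequality
  have hIccpos : ∀ t ∈ Icc t₁ t₂, (0 : ℝ) < t := fun t htmem => lt_of_lt_of_le ht₁ htmem.1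
  have hgcont : ContinuousOn g (Icc t₁ t₂) := by
    intro t htmem
    exact ((hgderiv t (hIccpos t htmem)).continuousAt).continuousWithinAt
  have hc'cont : Continuous fun t => ‖c' t‖ ^ 2 := by
    apply Continuous.pow
    apply Continuous.norm
    exact ((continuous_const.mul (Real.continuous_exp.comp (continuous_const.mul continuous_id))).div_const D).smul continuous_const
  have hψcont : ContinuousOn ψ (Icc t₁ t₂) := by
    apply ContinuousOn.sub
    · apply ContinuousOn.mul continuousOn_const
      apply ContinuousOn.mul
      · exact (Real.continuous_exp.comp (continuous_const.mul continuous_id)).continuousOn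
      · exact hφc.mono fun t htmem => hIccpos t htmem
    · exact (continuous_const.mul
        ((Real.continuous_exp.comp (continuous_const.mul continuous_id)).mul hc'cont)).continuousOn
  have hψint : MeasureTheory.IntegrableOn ψ (Icc t₁ t₂) :=
    hψcont.integrableOn_Icc
  have main : (∫ t in t₁..t₂, ψ t) ≤ g t₂ - g t₁ := by
    apply intervalIntegral.integral_le_sub_of_hasDeriv_right_of_le ht.le hgcont
      (fun t htmem => ((hgderiv t (lt_trans ht₁ htmem.1)).hasDerivWithinAt)) hψint
      (fun t htmem => hψle t (lt_trans ht₁ htmem.1))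
  -- computing the integral of ψ
  have hint1 : IntervalIntegrable (fun t => Real.exp (-a * t) * φ t)
      MeasureTheory.volume t₁ t₂ := by
    apply ContinuousOn.intervalIntegrable
    rw [uIcc_of_le ht.le]
    exact ((Real.continuous_exp.comp (continuous_const.mul continuous_id)).continuousOn).mul
      (hφc.mono fun t htmem => hIccpos t htmem)
  have hint2 : IntervalIntegrable (fun t => Real.exp (-a * t) * ‖c' t‖ ^ 2)
      MeasureTheory.volume t₁ t₂ :=
    ((Real.continuous_exp.comp (continuous_const.mul continuous_id)).mul hc'cont).intervalIntegrable _ _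
  have hexpint : (∫ t in t₁..t₂, Real.exp (a * t)) = D / a := by
    have h1 : ∀ t ∈ uIcc t₁ t₂, HasDerivAt (fun s => a⁻¹ * Real.exp (a * s)) (Real.exp (a * t)) t := by
      intro t _
      have := (hexpD t).const_mul a⁻¹
      exact this.congr_deriv (by rw [← mul_assoc, inv_mul_cancel₀ ha, one_mul])
    rw [intervalIntegral.integral_eq_sub_of_hasDerivAt h1
      ((Real.continuous_exp.comp (continuous_const.mul continuous_id)).intervalIntegrable _ _)]
    rw [hDdef]; field_simp
  have hval2 : (∫ t in t₁..t₂, Real.exp (-a * t) * ‖c' t‖ ^ 2) = a * ‖Δ‖ ^ 2 / D := by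
    have heq : ∀ t : ℝ, Real.exp (-a * t) * ‖c' t‖ ^ 2
        = (a ^ 2 * ‖Δ‖ ^ 2 / D ^ 2) * Real.exp (a * t) := by
      intro t
      have h1 : ‖c' t‖ ^ 2 = ((a * Real.exp (a * t)) / D) ^ 2 * ‖Δ‖ ^ 2 := by
        rw [hc'def]
        simp only [norm_smul, Real.norm_eq_abs, mul_pow, sq_abs]
      have h2 : Real.exp (-a * t) * Real.exp (a * t) = 1 := by
        rw [← Real.exp_add]; ring_nf; exact Real.exp_zero
      have h3 : Real.exp (-a * t) = (Real.exp (a * t))⁻¹ := by rw [neg_mul, Real.exp_neg]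
      rw [h1, h3, div_pow]
      field_simp
    calc (∫ t in t₁..t₂, Real.exp (-a * t) * ‖c' t‖ ^ 2)
        = ∫ t in t₁..t₂, (a ^ 2 * ‖Δ‖ ^ 2 / D ^ 2) * Real.exp (a * t) := by
          apply intervalIntegral.integral_congr; intro t _; exact heq t
      _ = (a ^ 2 * ‖Δ‖ ^ 2 / D ^ 2) * (D / a) := by
          rw [intervalIntegral.integral_const_mul, hexpint]
      _ = a * ‖Δ‖ ^ 2 / D := by field_simp
  have hψval : (∫ t in t₁..t₂, ψ t)
      = -(1 / α) * (∫ t in t₁..t₂, Real.exp (-a * t) * φ t)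
        - (α / (4 * γ)) * (a * ‖Δ‖ ^ 2 / D) := by
    rw [hψdef]
    rw [intervalIntegral.integral_sub (hint1.const_mul _) (hint2.const_mul _)]
    rw [intervalIntegral.integral_const_mul, intervalIntegral.integral_const_mul, hval2]
  -- assembling
  have hnorm : ‖x₁ - x₂‖ = ‖Δ‖ := by rw [hΔ, norm_sub_rev]
  have e1 : g t₂ - g t₁ = Real.exp (-a * t₂) * f (x₂, t₂) - Real.exp (-a * t₁) * f (x₁, t₁) := by
    rw [hgdef]; simp only [hc1, hc2]
  have e2 : -(1 / α) * (∫ t in t₁..t₂, Real.exp (-a * t) * φ t)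
      - (α / (4 * γ)) * a * ‖x₁ - x₂‖ ^ 2 / D = ∫ t in t₁..t₂, ψ t := by
    rw [hψval, hnorm]; ring
  rw [ge_iff_le, ← e1, e2]
  exact main
end

section
/- Let E be a real inner product space, let a be a nonzero real number, let 0 < t₁ < t₂, and let x₁, x₂ ∈ E. Then for every continuously differentiable path l : [t₁,t₂] → E with l(t₁) = x₁ and l(t₂) = x₂ one has ∫_{t₁}^{t₂} e^{−a t}·‖l′(t)‖² dt ≥ a·‖x₂ − x₁‖²/(e^{a t₂} − e^{a t₁}). -/
open MeasureTheory intervalIntegral Real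

/-- Lower bound half of the weighted path-energy minimization identity (5.32):
for any `C¹` path `l` from `x₁` to `x₂`,
`∫_{t₁}^{t₂} e^{-a t} ‖l'(t)‖² dt ≥ a ‖x₂-x₁‖²/(e^{a t₂}-e^{a t₁})`. -/
theorem stmt_4 {E : Type*} [NormedAddCommGroup E] [InnerProductSpace ℝ E]
    (a : ℝ) (ha : a ≠ 0) (t₁ t₂ : ℝ) (ht₁ : 0 < t₁) (ht : t₁ < t₂)
    (x₁ x₂ : E) (l : ℝ → E) (hl : ContDiff ℝ 1 l)
    (hl₁ : l t₁ = x₁) (hl₂ : l t₂ = x₂) :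
    (∫ t in t₁..t₂, Real.exp (-a * t) * ‖deriv l t‖ ^ 2) ≥
      a * ‖x₂ - x₁‖ ^ 2 / (Real.exp (a * t₂) - Real.exp (a * t₁)) := by
  have hle : t₁ ≤ t₂ := ht.le
  set μ : Measure ℝ := volume.restrict (Set.Ioc t₁ t₂) with hμ
  have hderiv : Continuous (deriv l) := hl.continuous_deriv le_rfl
  set f : ℝ → ℝ := fun t => Real.exp (-a * t / 2) * ‖deriv l t‖ with hf_def
  set g : ℝ → ℝ := fun t => Real.exp (a * t / 2) with hg_def
  have hfc : Continuous f := by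
    exact (Real.continuous_exp.comp (by fun_prop)).mul hderiv.norm
  have hgc : Continuous g := Real.continuous_exp.comp (by fun_prop)
  -- J : integral of exp(a t)
  set J : ℝ := ∫ t in t₁..t₂, Real.exp (a * t) with hJ_def
  have hJpos : 0 < J := by
    exact intervalIntegral_pos_of_pos
      ((Real.continuous_exp.comp (by fun_prop)).intervalIntegrable _ _)
      (fun x => Real.exp_pos _) ht
  set I : ℝ := ∫ t in t₁..t₂, Real.exp (-a * t) * ‖deriv l t‖ ^ 2 with hI_def
  have hInonneg : 0 ≤ I := by
    apply intervalIntegral.integral_nonneg hle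
    intro u _; positivity
  -- Memℒp facts
  have two_eq : (ENNReal.ofReal (2:ℝ)) = (2 : ENNReal) := by
    rw [ENNReal.ofReal_ofNat]
  have hmemf : MemLp f (ENNReal.ofReal (2:ℝ)) μ := by
    rw [two_eq, memLp_two_iff_integrable_sq hfc.aestronglyMeasurable]
    rw [hμ]
    exact ((hfc.pow 2).continuousOn.integrableOn_Icc).mono_set Set.Ioc_subset_Icc_self
  have hmemg : MemLp g (ENNReal.ofReal (2:ℝ)) μ := by
    rw [two_eq, memLp_two_iff_integrable_sq hgc.aestronglyMeasurable]
    rw [hμ]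
    exact ((hgc.pow 2).continuousOn.integrableOn_Icc).mono_set Set.Ioc_subset_Icc_self
  -- Hölder
  have holder := integral_mul_le_Lp_mul_Lq_of_nonneg (μ := μ)
    (Real.holderConjugate_iff_eq_conjExponent (by norm_num) |>.mpr (by norm_num))
    (Filter.Eventually.of_forall fun t => by positivity)
    (Filter.Eventually.of_forall fun t => (Real.exp_pos _).le) hmemf hmemg
  -- rewrite the pieces
  have hfg : ∀ t, f t * g t = ‖deriv l t‖ := by
    intro t
    simp only [hf_def, hg_def]
    rw [mul_comm (Real.exp _), mul_assoc, ← Real.exp_add]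
    ring_nf
    simp
  have hf2 : ∀ t, f t ^ (2:ℝ) = Real.exp (-a * t) * ‖deriv l t‖ ^ 2 := by
    intro t
    rw [show (2:ℝ) = ((2:ℕ):ℝ) by norm_num, Real.rpow_natCast]
    simp only [hf_def]
    rw [mul_pow, ← Real.exp_nat_mul]
    ring_nf
  have hg2 : ∀ t, g t ^ (2:ℝ) = Real.exp (a * t) := by
    intro t
    rw [show (2:ℝ) = ((2:ℕ):ℝ) by norm_num, Real.rpow_natCast]
    simp only [hg_def]
    rw [← Real.exp_nat_mul]
    ring_nf
  -- interval integrals equal μ-integrals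
  have hconv : ∀ (h : ℝ → ℝ), (∫ t in t₁..t₂, h t) = ∫ t, h t ∂μ := by
    intro h
    rw [intervalIntegral.integral_of_le hle, hμ]
  have key : ‖x₂ - x₁‖ ≤ I ^ ((1:ℝ)/2) * J ^ ((1:ℝ)/2) := by
    have h1 : ‖x₂ - x₁‖ ≤ ∫ t in t₁..t₂, ‖deriv l t‖ := by
      set ι := (UniformSpace.Completion.toComplL : E →L[ℝ] UniformSpace.Completion E) with hι
      have hnorm : ∀ x : E, ‖ι x‖ = ‖x‖ := fun x =>
        UniformSpace.Completion.norm_coe x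
      have hdm : ∀ t : ℝ, HasDerivAt (fun s => ι (l s)) (ι (deriv l t)) t := fun t =>
        ι.hasFDerivAt.comp_hasDerivAt t (hl.differentiable one_ne_zero t).hasDerivAt
      have hint : IntervalIntegrable (fun t => ι (deriv l t)) volume t₁ t₂ :=
        (ι.continuous.comp hderiv).intervalIntegrable _ _
      have heq : ι x₂ - ι x₁ = ∫ t in t₁..t₂, ι (deriv l t) := by
        rw [← hl₁, ← hl₂]
        exact (intervalIntegral.integral_eq_sub_of_hasDerivAt (fun t _ => hdm t) hint).symm
      calc ‖x₂ - x₁‖ = ‖ι x₂ - ι x₁‖ := by rw [← map_sub, hnorm]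
        _ ≤ ∫ t in t₁..t₂, ‖ι (deriv l t)‖ :=
            heq ▸ intervalIntegral.norm_integral_le_integral_norm hle
        _ = ∫ t in t₁..t₂, ‖deriv l t‖ :=
            intervalIntegral.integral_congr fun t _ => hnorm _
    have h2 : (∫ t in t₁..t₂, ‖deriv l t‖) = ∫ t, f t * g t ∂μ := by
      rw [← hconv]
      exact intervalIntegral.integral_congr fun t _ => (hfg t).symm
    have h3 : (∫ t, f t ^ (2:ℝ) ∂μ) = I := by
      rw [hI_def, hconv]
      exact integral_congr_ae (Filter.Eventually.of_forall fun t => hf2 t)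
    have h4 : (∫ t, g t ^ (2:ℝ) ∂μ) = J := by
      rw [hJ_def, hconv]
      exact integral_congr_ae (Filter.Eventually.of_forall fun t => hg2 t)
    calc ‖x₂ - x₁‖ ≤ ∫ t, f t * g t ∂μ := h2 ▸ h1
      _ ≤ (∫ t, f t ^ (2:ℝ) ∂μ) ^ ((1:ℝ)/2) * (∫ t, g t ^ (2:ℝ) ∂μ) ^ ((1:ℝ)/2) := holder
      _ = I ^ ((1:ℝ)/2) * J ^ ((1:ℝ)/2) := by rw [h3, h4]
  have key2 : ‖x₂ - x₁‖ ^ 2 ≤ I * J := by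
    have := pow_le_pow_left₀ (norm_nonneg _) key 2
    calc ‖x₂ - x₁‖ ^ 2 ≤ (I ^ ((1:ℝ)/2) * J ^ ((1:ℝ)/2)) ^ 2 := this
      _ = I * J := by
        rw [mul_pow, ← Real.rpow_natCast (I ^ ((1:ℝ)/2)) 2,
          ← Real.rpow_natCast (J ^ ((1:ℝ)/2)) 2,
          ← Real.rpow_mul hInonneg, ← Real.rpow_mul hJpos.le]
        norm_num
  -- compute J
  have hJval : J = (Real.exp (a * t₂) - Real.exp (a * t₁)) / a := by
    rw [hJ_def, intervalIntegral.integral_comp_mul_left (fun x => Real.exp x) ha,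
      integral_exp, smul_eq_mul]
    field_simp
  -- conclude
  rw [ge_iff_le]
  have : a * ‖x₂ - x₁‖ ^ 2 / (Real.exp (a * t₂) - Real.exp (a * t₁)) = ‖x₂ - x₁‖ ^ 2 / J := by
    rw [hJval, div_div_eq_mul_div, mul_comm]
  rw [this, div_le_iff₀ hJpos]
  exact key2
end

section
/- Let E be a real inner product space, let a be a nonzero real number, let 0 < t₁ < t₂, and let x₁, x₂ ∈ E. Define the path l : [t₁,t₂] → E by l(t) = x₁ + ((e^{a t} − e^{a t₁})/(e^{a t₂} − e^{a t₁}))·(x₂ − x₁). Then l(t₁) = x₁, l(t₂) = x₂, l is continuously differentiable, and ∫_{t₁}^{t₂} e^{−a t}·‖l′(t)‖² dt = a·‖x₂ − x₁‖²/(e^{a t₂} − e^{a t₁}). Consequently the infimum of ∫_{t₁}^{t₂} e^{−a t}‖l′(t)‖² dt over all continuously differentiable paths from x₁ to x₂ equals a·‖x₂ − x₁‖²/(e^{a t₂} − e^{a t₁}). -/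
open Real intervalIntegral
open scoped RealInnerProductSpace

lemma exp_mul_intervalIntegral (a : ℝ) (ha : a ≠ 0) (t₁ t₂ : ℝ) :
    ∫ t in t₁..t₂, Real.exp (a * t) = (Real.exp (a * t₂) - Real.exp (a * t₁)) / a := by
  have h : ∀ t ∈ Set.uIcc t₁ t₂,
      HasDerivAt (fun t => Real.exp (a * t) / a) (Real.exp (a * t)) t := by
    intro t _
    have h1 : HasDerivAt (fun t : ℝ => Real.exp (a * t)) (a * Real.exp (a * t)) t := by
      simpa [mul_comm] using ((hasDerivAt_id t).const_mul a).exp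
    simpa [mul_div_cancel_left₀ _ ha] using h1.div_const a
  rw [intervalIntegral.integral_eq_sub_of_hasDerivAt h
    (((Real.continuous_exp.comp (continuous_const.mul continuous_id)).intervalIntegrable _ _))]
  ring

lemma aD_pos (a : ℝ) (ha : a ≠ 0) {t₁ t₂ : ℝ} (ht : t₁ < t₂) :
    0 < a * (Real.exp (a * t₂) - Real.exp (a * t₁)) := by
  rcases lt_or_gt_of_ne ha with h | h
  · have : Real.exp (a * t₂) < Real.exp (a * t₁) := Real.exp_lt_exp.2 (by nlinarith)
    nlinarith
  · have : Real.exp (a * t₁) < Real.exp (a * t₂) := Real.exp_lt_exp.2 (by nlinarith)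
    nlinarith

lemma weighted_energy_lower_bound {E : Type*} [NormedAddCommGroup E] [InnerProductSpace ℝ E]
    (a : ℝ) (ha : a ≠ 0) (t₁ t₂ : ℝ) (ht : t₁ < t₂) (v : E)
    (g : ℝ → E) (hg : ContDiff ℝ 1 g) (hsub : g t₂ - g t₁ = v) :
    a * ‖v‖ ^ 2 / (Real.exp (a * t₂) - Real.exp (a * t₁)) ≤
      ∫ t in t₁..t₂, Real.exp (-a * t) * ‖deriv g t‖ ^ 2 := by
  set D : ℝ := Real.exp (a * t₂) - Real.exp (a * t₁) with hDdef
  have haD : 0 < a * D := aD_pos a ha ht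
  have hD : D ≠ 0 := by intro h; rw [h, mul_zero] at haD; exact lt_irrefl 0 haD
  set c : ℝ := a / D with hc
  have hg' : Continuous (deriv g) := hg.continuous_deriv le_rfl
  -- FTC for the scalar function t ↦ ⟪v, g t⟫
  have hinner : (∫ t in t₁..t₂, ⟪v, deriv g t⟫) = ‖v‖ ^ 2 := by
    have hft : ∀ t ∈ Set.uIcc t₁ t₂,
        HasDerivAt (fun s => ⟪v, g s⟫) ⟪v, deriv g t⟫ t := by
      intro t _
      simpa [Function.comp_def] using
        ((innerSL ℝ v).hasFDerivAt.comp_hasDerivAt t (hg.differentiable one_ne_zero t).hasDerivAt)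
    rw [intervalIntegral.integral_eq_sub_of_hasDerivAt hft
      ((continuous_const.inner hg').intervalIntegrable _ _)]
    rw [← inner_sub_right, hsub, real_inner_self_eq_norm_sq]
  have expand : ∀ t, Real.exp (-a * t) * ‖deriv g t - (c * Real.exp (a * t)) • v‖ ^ 2 =
      Real.exp (-a * t) * ‖deriv g t‖ ^ 2 - (2 * c) * ⟪v, deriv g t⟫ +
        (c ^ 2 * ‖v‖ ^ 2) * Real.exp (a * t) := by
    intro t
    rw [norm_sub_sq_real, real_inner_smul_right, real_inner_comm, norm_smul, mul_pow,
      Real.norm_eq_abs, sq_abs, neg_mul, Real.exp_neg]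
    have h := Real.exp_ne_zero (a * t)
    field_simp
  have i1 : IntervalIntegrable (fun t => Real.exp (-a * t) * ‖deriv g t‖ ^ 2)
      MeasureTheory.volume t₁ t₂ :=
    ((Real.continuous_exp.comp (continuous_const.mul continuous_id)).mul
      ((hg'.norm).pow 2)).intervalIntegrable _ _
  have i2 : IntervalIntegrable (fun t => (2 * c) * ⟪v, deriv g t⟫)
      MeasureTheory.volume t₁ t₂ :=
    (continuous_const.mul (continuous_const.inner hg')).intervalIntegrable _ _
  have i3 : IntervalIntegrable (fun t => (c ^ 2 * ‖v‖ ^ 2) * Real.exp (a * t))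
      MeasureTheory.volume t₁ t₂ :=
    (continuous_const.mul (Real.continuous_exp.comp
      (continuous_const.mul continuous_id))).intervalIntegrable _ _
  have key : 0 ≤ (∫ t in t₁..t₂, Real.exp (-a * t) * ‖deriv g t‖ ^ 2) -
      (2 * c) * ‖v‖ ^ 2 + (c ^ 2 * ‖v‖ ^ 2) * (D / a) := by
    calc (0:ℝ) ≤ ∫ t in t₁..t₂, Real.exp (-a * t) * ‖deriv g t - (c * Real.exp (a * t)) • v‖ ^ 2 :=
            intervalIntegral.integral_nonneg ht.le (fun u _ => by positivity)
      _ = ∫ t in t₁..t₂, (Real.exp (-a * t) * ‖deriv g t‖ ^ 2 - (2 * c) * ⟪v, deriv g t⟫ +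
            (c ^ 2 * ‖v‖ ^ 2) * Real.exp (a * t)) :=
            intervalIntegral.integral_congr (fun t _ => expand t)
      _ = (∫ t in t₁..t₂, Real.exp (-a * t) * ‖deriv g t‖ ^ 2) -
            (2 * c) * ‖v‖ ^ 2 + (c ^ 2 * ‖v‖ ^ 2) * (D / a) := by
            rw [intervalIntegral.integral_add (i1.sub i2) i3,
              intervalIntegral.integral_sub i1 i2,
              intervalIntegral.integral_const_mul, hinner,
              intervalIntegral.integral_const_mul,
              exp_mul_intervalIntegral a ha]
  have heq : a * ‖v‖ ^ 2 / D = (2 * c) * ‖v‖ ^ 2 - (c ^ 2 * ‖v‖ ^ 2) * (D / a) := by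
    rw [hc]; field_simp; ring
  linarith

/-- Attainment half of the weighted path-energy minimization identity (5.32):
the straight segment traversed with speed proportional to `e^{a t}` realizes
`∫_{t₁}^{t₂} e^{-a t} ‖l'(t)‖² dt = a ‖x₂-x₁‖²/(e^{a t₂}-e^{a t₁})`, and this
value is the minimum (hence the infimum) of the weighted energy over all `C¹`
paths from `x₁` to `x₂`. -/
theorem stmt_5 {E : Type*} [NormedAddCommGroup E] [InnerProductSpace ℝ E]
    (a : ℝ) (ha : a ≠ 0) (t₁ t₂ : ℝ) (ht₁ : 0 < t₁) (ht : t₁ < t₂)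
    (x₁ x₂ : E) (l : ℝ → E)
    (hl : ∀ t, l t = x₁ +
      ((Real.exp (a * t) - Real.exp (a * t₁)) /
        (Real.exp (a * t₂) - Real.exp (a * t₁))) • (x₂ - x₁)) :
    l t₁ = x₁ ∧ l t₂ = x₂ ∧ ContDiff ℝ 1 l ∧
    (∫ t in t₁..t₂, Real.exp (-a * t) * ‖deriv l t‖ ^ 2) =
      a * ‖x₂ - x₁‖ ^ 2 / (Real.exp (a * t₂) - Real.exp (a * t₁)) ∧
    IsLeast {I : ℝ | ∃ g : ℝ → E, ContDiff ℝ 1 g ∧ g t₁ = x₁ ∧ g t₂ = x₂ ∧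
        I = ∫ t in t₁..t₂, Real.exp (-a * t) * ‖deriv g t‖ ^ 2}
      (a * ‖x₂ - x₁‖ ^ 2 / (Real.exp (a * t₂) - Real.exp (a * t₁))) := by
  have haD : 0 < a * (Real.exp (a * t₂) - Real.exp (a * t₁)) := aD_pos a ha ht
  have hD : (Real.exp (a * t₂) - Real.exp (a * t₁)) ≠ 0 := by
    intro h; rw [h, mul_zero] at haD; exact lt_irrefl 0 haD
  have h1 : l t₁ = x₁ := by rw [hl]; simp
  have h2 : l t₂ = x₂ := by rw [hl, div_self hD, one_smul, add_sub_cancel]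
  have hder : ∀ t, HasDerivAt l
      ((a * Real.exp (a * t) / (Real.exp (a * t₂) - Real.exp (a * t₁))) • (x₂ - x₁)) t := by
    intro t
    have hexp : HasDerivAt (fun t : ℝ => Real.exp (a * t)) (a * Real.exp (a * t)) t := by
      simpa [mul_comm] using ((hasDerivAt_id t).const_mul a).exp
    have : HasDerivAt (fun t => x₁ + ((Real.exp (a * t) - Real.exp (a * t₁)) /
        (Real.exp (a * t₂) - Real.exp (a * t₁))) • (x₂ - x₁))
        ((a * Real.exp (a * t) / (Real.exp (a * t₂) - Real.exp (a * t₁))) • (x₂ - x₁)) t :=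
      (((hexp.sub_const _).div_const _).smul_const (x₂ - x₁)).const_add x₁
    exact this.congr_of_eventuallyEq (Filter.Eventually.of_forall hl)
  have hcd : ContDiff ℝ 1 l := by
    have : ContDiff ℝ 1 (fun t => x₁ + ((Real.exp (a * t) - Real.exp (a * t₁)) /
        (Real.exp (a * t₂) - Real.exp (a * t₁))) • (x₂ - x₁)) :=
      contDiff_const.add ((((Real.contDiff_exp.comp (contDiff_const.mul contDiff_id)).sub
        contDiff_const).div_const _).smul contDiff_const)
    rw [funext hl]; exact this
  have hint : (∫ t in t₁..t₂, Real.exp (-a * t) * ‖deriv l t‖ ^ 2) =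
      a * ‖x₂ - x₁‖ ^ 2 / (Real.exp (a * t₂) - Real.exp (a * t₁)) := by
    have hcongr : ∀ t, Real.exp (-a * t) * ‖deriv l t‖ ^ 2 =
        (a ^ 2 * ‖x₂ - x₁‖ ^ 2 / (Real.exp (a * t₂) - Real.exp (a * t₁)) ^ 2) *
          Real.exp (a * t) := by
      intro t
      rw [(hder t).deriv, norm_smul, mul_pow, Real.norm_eq_abs, sq_abs, neg_mul, Real.exp_neg]
      have h := Real.exp_ne_zero (a * t)
      field_simp
    rw [intervalIntegral.integral_congr (fun t _ => hcongr t),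
      intervalIntegral.integral_const_mul, exp_mul_intervalIntegral a ha]
    field_simp
  refine ⟨h1, h2, hcd, hint, ⟨l, hcd, h1, h2, hint.symm⟩, ?_⟩
  rintro I ⟨g, hg, hg1, hg2, rfl⟩
  exact weighted_energy_lower_bound a ha t₁ t₂ ht (x₂ - x₁) g hg (by rw [hg1, hg2])
end

section
/- Let n ≥ 1, let a be a nonzero real number, C ∈ ℝ, let x₁, x₂ ∈ ℝⁿ and 0 < t₁ < t₂. Set x₀ = ((e^{a t₂} − 1)·x₁ − (e^{a t₁} − 1)·x₂)/(e^{a t₂} − e^{a t₁}) and define f : ℝⁿ × (0,∞) → ℝ by f(x,t) = −a·‖x − x₀‖²/(4(1 − e^{−a t})) − (n/2)·e^{a t}·ln|1 − e^{−a t}| + C·e^{a t}. Then e^{−a t₂}·f(x₂,t₂) − e^{−a t₁}·f(x₁,t₁) = −(n/2)·ln( |1 − e^{−a t₂}| / |1 − e^{−a t₁}| ) − a·‖x₁ − x₂‖²/(4(e^{a t₂} − e^{a t₁})). -/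
/-- Sharpness identity (5.39) for the Harnack inequality of the logarithmic
heat equation: for the logarithm `f` of the explicit solution family (5.27)
centered at the point `x₀` of (5.40), one has
`e^{-a t₂} f(x₂,t₂) - e^{-a t₁} f(x₁,t₁)
  = -(n/2) ln(|1-e^{-a t₂}|/|1-e^{-a t₁}|) - a‖x₁-x₂‖²/(4(e^{a t₂}-e^{a t₁}))`. -/
theorem stmt_6 (n : ℕ) (hn : 1 ≤ n) (a : ℝ) (ha : a ≠ 0) (C : ℝ)
    (x₁ x₂ : EuclideanSpace ℝ (Fin n)) (t₁ t₂ : ℝ) (ht₁ : 0 < t₁) (ht : t₁ < t₂)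
    (x₀ : EuclideanSpace ℝ (Fin n))
    (hx₀ : x₀ = (Real.exp (a * t₂) - Real.exp (a * t₁))⁻¹ •
      ((Real.exp (a * t₂) - 1) • x₁ - (Real.exp (a * t₁) - 1) • x₂))
    (f : EuclideanSpace ℝ (Fin n) → ℝ → ℝ)
    (hf : ∀ x t, f x t =
      -(a * ‖x - x₀‖ ^ 2) / (4 * (1 - Real.exp (-a * t)))
        - (n / 2) * Real.exp (a * t) * Real.log |1 - Real.exp (-a * t)|
        + C * Real.exp (a * t)) :
    Real.exp (-a * t₂) * f x₂ t₂ - Real.exp (-a * t₁) * f x₁ t₁ =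
      -(n / 2) * Real.log (|1 - Real.exp (-a * t₂)| / |1 - Real.exp (-a * t₁)|)
        - a * ‖x₁ - x₂‖ ^ 2 / (4 * (Real.exp (a * t₂) - Real.exp (a * t₁))) := by
  have ht₂ : (0:ℝ) < t₂ := ht₁.trans ht
  have hat₁ : a * t₁ ≠ 0 := mul_ne_zero ha ht₁.ne'
  have hat₂ : a * t₂ ≠ 0 := mul_ne_zero ha ht₂.ne'
  have hEne : Real.exp (a * t₂) - Real.exp (a * t₁) ≠ 0 := by
    intro h
    exact (mul_ne_zero ha (sub_ne_zero.mpr ht.ne')) (by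
      have := Real.exp_injective (sub_eq_zero.mp h)
      linarith [this])
  have hF₁ : Real.exp (-a * t₁) ≠ 1 := by
    rw [Ne, Real.exp_eq_one_iff]; intro h; apply hat₁; linarith
  have hF₂ : Real.exp (-a * t₂) ≠ 1 := by
    rw [Ne, Real.exp_eq_one_iff]; intro h; apply hat₂; linarith
  have h1F₁ : 1 - Real.exp (-a * t₁) ≠ 0 := sub_ne_zero.mpr (Ne.symm hF₁)
  have h1F₂ : 1 - Real.exp (-a * t₂) ≠ 0 := sub_ne_zero.mpr (Ne.symm hF₂)
  have hEF₁ : Real.exp (a * t₁) * Real.exp (-a * t₁) = 1 := by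
    rw [← Real.exp_add]; ring_nf; exact Real.exp_zero
  have hEF₂ : Real.exp (a * t₂) * Real.exp (-a * t₂) = 1 := by
    rw [← Real.exp_add]; ring_nf; exact Real.exp_zero
  have key₂ : x₂ - x₀ =
      ((Real.exp (a * t₂) - 1) / (Real.exp (a * t₂) - Real.exp (a * t₁))) • (x₂ - x₁) := by
    rw [hx₀]
    match_scalars <;> field_simp <;> ring
  have key₁ : x₁ - x₀ =
      ((Real.exp (a * t₁) - 1) / (Real.exp (a * t₂) - Real.exp (a * t₁))) • (x₂ - x₁) := by
    rw [hx₀]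
    match_scalars <;> field_simp <;> ring
  have hn₂ : ‖x₂ - x₀‖ ^ 2 =
      ((Real.exp (a * t₂) - 1) / (Real.exp (a * t₂) - Real.exp (a * t₁))) ^ 2 *
        ‖x₁ - x₂‖ ^ 2 := by
    rw [key₂, norm_smul, norm_sub_rev x₂ x₁, mul_pow, Real.norm_eq_abs, sq_abs]
  have hn₁ : ‖x₁ - x₀‖ ^ 2 =
      ((Real.exp (a * t₁) - 1) / (Real.exp (a * t₂) - Real.exp (a * t₁))) ^ 2 *
        ‖x₁ - x₂‖ ^ 2 := by
    rw [key₁, norm_smul, norm_sub_rev x₂ x₁, mul_pow, Real.norm_eq_abs, sq_abs]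
  rw [hf, hf, hn₁, hn₂,
    Real.log_div (abs_ne_zero.mpr h1F₂) (abs_ne_zero.mpr h1F₁)]
  have hE₁ : Real.exp (a * t₁) ≠ 0 := Real.exp_ne_zero _
  have hE₂ : Real.exp (a * t₂) ≠ 0 := Real.exp_ne_zero _
  have hinv : ∀ t : ℝ, Real.exp (-a * t) = (Real.exp (a * t))⁻¹ := fun t => by
    rw [neg_mul, Real.exp_neg]
  have hE₁1 : Real.exp (a * t₁) - 1 ≠ 0 := by
    rw [Ne, sub_eq_zero, Real.exp_eq_one_iff]; exact hat₁
  have hE₂1 : Real.exp (a * t₂) - 1 ≠ 0 := by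
    rw [Ne, sub_eq_zero, Real.exp_eq_one_iff]; exact hat₂
  have hrw : ∀ t : ℝ, 1 - (Real.exp (a * t))⁻¹ =
      (Real.exp (a * t) - 1) * (Real.exp (a * t))⁻¹ := fun t => by
    field_simp
  simp only [hinv, hrw]
  generalize Real.log |(Real.exp (a * t₁) - 1) * (Real.exp (a * t₁))⁻¹| = L₁
  generalize Real.log |(Real.exp (a * t₂) - 1) * (Real.exp (a * t₂))⁻¹| = L₂
  field_simp
  ring
end

section
/- Let E be a real inner product space, let γ, α be positive real constants, let φ : (0,∞) → ℝ be continuous, let N ≥ 1, let a₁, …, a_N be nonnegative real numbers and p₁, …, p_N real numbers. Let f : E × (0,∞) → ℝ be differentiable and suppose that for all x ∈ E, t > 0: γ·‖∇ₓf(x,t)‖² − α·∂ₜf(x,t) + α·Σ_{i=1}^{N} aᵢ·e^{(pᵢ−1)·f(x,t)} − φ(t) ≤ 0. Then for any x₁, x₂ ∈ E and any 0 < t₁ < t₂ one has f(x₂,t₂) − f(x₁,t₁) ≥ −(1/α)·∫_{t₁}^{t₂} φ(t) dt − (α/(4γ))·‖x₁ − x₂‖²/(t₂ − t₁). -/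
open Set

private lemma stmt_8_aux {γ α τ X V A B φt : ℝ} (hγ : 0 < γ) (hα : 0 < α) (hτ : 0 < τ)
    (h1 : γ * X ^ 2 - φt ≤ α * B) (h2 : -(X * V) ≤ A) :
    -(α / (4 * γ)) * V ^ 2 / τ - (τ / α) * φt ≤ A + τ * B := by
  have hquad : -(X * V) + (τ / α) * (γ * X ^ 2) + (α / (4 * γ)) * V ^ 2 / τ
      = (2 * γ * τ * X - α * V) ^ 2 / (4 * γ * τ * α) := by
    field_simp
    ring
  have hquad0 : 0 ≤ -(X * V) + (τ / α) * (γ * X ^ 2) + (α / (4 * γ)) * V ^ 2 / τ := by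
    rw [hquad]; positivity
  have h4 : (τ / α) * (γ * X ^ 2 - φt) ≤ τ * B := by
    calc (τ / α) * (γ * X ^ 2 - φt) ≤ (τ / α) * (α * B) :=
          mul_le_mul_of_nonneg_left h1 (div_pos hτ hα).le
      _ = τ * B := by field_simp
  have h5 : (τ / α) * (γ * X ^ 2 - φt) = (τ / α) * (γ * X ^ 2) - (τ / α) * φt := by ring
  ring_nf at hquad0 h4 h5 ⊢
  linarith

/-- Harnack inequality (2.17) of Theorem 2.7 for Yamabe-type equations in the
Euclidean setting: if `γ‖∇ₓf‖² - α ∂ₜf + α Σᵢ aᵢ e^{(pᵢ-1)f} - φ(t) ≤ 0` with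
constants `γ, α > 0` and `aᵢ ≥ 0`, then
`f(x₂,t₂) - f(x₁,t₁) ≥ -(1/α)∫_{t₁}^{t₂} φ(t) dt - (α/(4γ))‖x₁-x₂‖²/(t₂-t₁)`. -/
theorem stmt_8 {E : Type*} [NormedAddCommGroup E] [InnerProductSpace ℝ E]
    (γ α : ℝ) (hγ : 0 < γ) (hα : 0 < α)
    (φ : ℝ → ℝ) (hφc : ContinuousOn φ (Set.Ioi 0))
    (N : ℕ) (hN : 1 ≤ N) (a p : Fin N → ℝ) (ha : ∀ i, 0 ≤ a i)
    (f : E × ℝ → ℝ)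
    (hf : ∀ (x : E) (t : ℝ), 0 < t → DifferentiableAt ℝ f (x, t))
    (hharnack : ∀ (x : E) (t : ℝ), 0 < t →
      γ * ‖fderiv ℝ (fun y => f (y, t)) x‖ ^ 2
        - α * deriv (fun s => f (x, s)) t
        + α * ∑ i, a i * Real.exp ((p i - 1) * f (x, t)) - φ t ≤ 0)
    (x₁ x₂ : E) (t₁ t₂ : ℝ) (ht₁ : 0 < t₁) (ht : t₁ < t₂) :
    f (x₂, t₂) - f (x₁, t₁) ≥
      -(1 / α) * (∫ t in t₁..t₂, φ t)
        - (α / (4 * γ)) * ‖x₁ - x₂‖ ^ 2 / (t₂ - t₁) := by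
  have hτ : 0 < t₂ - t₁ := sub_pos.2 ht
  set τ : ℝ := t₂ - t₁ with hτdef
  set v : E := x₂ - x₁ with hvdef
  -- positivity of time along the path
  have hct : ∀ s : ℝ, 0 ≤ s → 0 < t₁ + s * τ := by
    intro s hs
    have : 0 ≤ s * τ := mul_nonneg hs hτ.le
    linarith
  -- ψ is the time-changed φ
  set ψ : ℝ → ℝ := fun u => φ (τ * u + t₁) with hψdef
  have hψcAt : ∀ s : ℝ, 0 ≤ s → ContinuousAt ψ s := by
    intro s hs
    have hpos : 0 < τ * s + t₁ := by nlinarith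
    have h1 : ContinuousAt φ (τ * s + t₁) :=
      hφc.continuousAt (Ioi_mem_nhds hpos)
    have h2 : ContinuousAt (fun u : ℝ => τ * u + t₁) s := by fun_prop
    have h3 : ContinuousAt (φ ∘ fun u : ℝ => τ * u + t₁) s :=
      ContinuousAt.comp (f := fun u : ℝ => τ * u + t₁) h1 h2
    exact h3
  -- derivative of the path composed with f
  have hkey : ∀ s : ℝ, 0 ≤ s →
      HasDerivAt (fun u : ℝ => f (x₁ + u • v, t₁ + u * τ))
        ((fderiv ℝ f (x₁ + s • v, t₁ + s * τ)) (v, τ)) s := by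
    intro s hs
    have hc : HasDerivAt (fun u : ℝ => ((x₁ + u • v, t₁ + u * τ) : E × ℝ)) (v, τ) s := by
      have h1 : HasDerivAt (fun u : ℝ => x₁ + u • v) v s := by
        simpa using ((hasDerivAt_id s).smul_const v).const_add x₁
      have h2 : HasDerivAt (fun u : ℝ => t₁ + u * τ) τ s := by
        simpa using ((hasDerivAt_id s).mul_const τ).const_add t₁
      exact h1.prodMk h2
    exact ((hf _ _ (hct s hs)).hasFDerivAt.comp_hasDerivAt s hc)
  -- lower bound on the derivative of the path composed with f
  have hbound : ∀ s : ℝ, 0 ≤ s →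
      -(α / (4 * γ)) * ‖v‖ ^ 2 / τ - (τ / α) * ψ s ≤
        (fderiv ℝ f (x₁ + s • v, t₁ + s * τ)) (v, τ) := by
    intro s hs
    set x : E := x₁ + s • v with hxdef
    set t : ℝ := t₁ + s * τ with htdef
    have htpos : 0 < t := hct s hs
    set L := fderiv ℝ f (x, t) with hLdef
    have hfx := (hf x t htpos).hasFDerivAt
    have h1 : fderiv ℝ (fun y => f (y, t)) x = L.comp (ContinuousLinearMap.inl ℝ E ℝ) := by
      have hin : HasFDerivAt (fun y : E => ((y, t) : E × ℝ))
          (ContinuousLinearMap.inl ℝ E ℝ) x :=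
        (hasFDerivAt_id x).prodMk (hasFDerivAt_const t x)
      exact (hfx.comp x hin).fderiv
    have h2 : deriv (fun s' => f (x, s')) t = L ((0 : E), (1 : ℝ)) := by
      have hcurve : HasDerivAt (fun s' : ℝ => ((x, s') : E × ℝ)) ((0 : E), (1 : ℝ)) t :=
        (hasDerivAt_const t x).prodMk (hasDerivAt_id t)
      exact (hfx.comp_hasDerivAt t hcurve).deriv
    have hH := hharnack x t htpos
    rw [h1, h2] at hH
    set X := ‖L.comp (ContinuousLinearMap.inl ℝ E ℝ)‖ with hXdef
    have hsum : 0 ≤ ∑ i, a i * Real.exp ((p i - 1) * f (x, t)) :=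
      Finset.sum_nonneg fun i _ => mul_nonneg (ha i) (Real.exp_pos _).le
    have hL01 : γ * X ^ 2 - φ t ≤ α * L ((0 : E), (1 : ℝ)) := by
      nlinarith [mul_nonneg hα.le hsum]
    have hLv0 : -(X * ‖v‖) ≤ L (v, (0 : ℝ)) := by
      have hle := (L.comp (ContinuousLinearMap.inl ℝ E ℝ)).le_opNorm v
      have habs : |L (v, (0 : ℝ))| ≤ X * ‖v‖ := by
        simpa [ContinuousLinearMap.comp_apply, Real.norm_eq_abs] using hle
      linarith [neg_abs_le (L (v, (0 : ℝ)))]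
    have hsplit : L (v, τ) = L (v, (0 : ℝ)) + τ * L ((0 : E), (1 : ℝ)) := by
      have hvt : ((v, τ) : E × ℝ) = (v, (0 : ℝ)) + τ • ((0 : E), (1 : ℝ)) := by
        simp [Prod.ext_iff]
      rw [hvt, map_add, map_smul, smul_eq_mul]
    have hψt : ψ s = φ t := by
      simp only [hψdef, htdef]
      ring_nf
    rw [hsplit, hψt]
    exact stmt_8_aux hγ hα hτ hL01 hLv0
  -- monotone auxiliary function
  set G : ℝ → ℝ := fun s =>
    f (x₁ + s • v, t₁ + s * τ) + (α / (4 * γ)) * ‖v‖ ^ 2 / τ * s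
      + (τ / α) * ∫ u in (0 : ℝ)..s, ψ u with hGdef
  have hU : IsOpen (Ioi (-(t₁ / τ)) : Set ℝ) := isOpen_Ioi
  have hψcOn : ContinuousOn ψ (Ioi (-(t₁ / τ))) := by
    intro u hu
    have hu' : -(t₁ / τ) < u := hu
    have hpos : 0 < τ * u + t₁ := by
      have h := mul_lt_mul_of_pos_left hu' hτ
      have he : τ * -(t₁ / τ) = -t₁ := by field_simp
      rw [he] at h
      linarith
    have hφa : ContinuousAt φ (τ * u + t₁) := hφc.continuousAt (Ioi_mem_nhds hpos)
    have haff : ContinuousAt (fun w : ℝ => τ * w + t₁) u := by fun_prop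
    have h3 : ContinuousAt (φ ∘ fun w : ℝ => τ * w + t₁) u :=
      ContinuousAt.comp (f := fun w : ℝ => τ * w + t₁) hφa haff
    exact h3.continuousWithinAt
  have hGderiv : ∀ s : ℝ, 0 ≤ s →
      HasDerivAt G ((fderiv ℝ f (x₁ + s • v, t₁ + s * τ)) (v, τ)
        + (α / (4 * γ)) * ‖v‖ ^ 2 / τ + (τ / α) * ψ s) s := by
    intro s hs
    have hmem : s ∈ Ioi (-(t₁ / τ)) := by
      have : 0 < t₁ / τ := div_pos ht₁ hτ
      simpa using lt_of_lt_of_le (by linarith) hs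
    have hint : IntervalIntegrable ψ MeasureTheory.volume 0 s := by
      apply ContinuousOn.intervalIntegrable
      apply hψcOn.mono
      intro u hu
      have h0 : (0:ℝ) ≤ u := by
        rcases Set.mem_uIcc.mp hu with h | h
        · exact h.1
        · linarith [h.1, h.2, hs]
      have hpos : 0 < t₁ / τ := div_pos ht₁ hτ
      exact lt_of_lt_of_le (by linarith) h0
    have hI : HasDerivAt (fun u : ℝ => ∫ x in (0:ℝ)..u, ψ x) (ψ s) s :=
      intervalIntegral.integral_hasDerivAt_right hint
        (hψcOn.stronglyMeasurableAtFilter hU s hmem) (hψcAt s hs)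
    have h2 : HasDerivAt (fun u : ℝ => (α / (4 * γ)) * ‖v‖ ^ 2 / τ * u)
        ((α / (4 * γ)) * ‖v‖ ^ 2 / τ) s := by
      simpa using (hasDerivAt_id s).const_mul ((α / (4 * γ)) * ‖v‖ ^ 2 / τ)
    exact ((hkey s hs).add h2).add (hI.const_mul (τ / α))
  -- monotonicity of G on [0,1]
  have hmono : MonotoneOn G (Icc (0 : ℝ) 1) := by
    apply monotoneOn_of_deriv_nonneg (convex_Icc 0 1)
    · intro s hs
      exact ((hGderiv s hs.1).continuousAt).continuousWithinAt
    · intro s hs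
      rw [interior_Icc] at hs
      exact ((hGderiv s hs.1.le).differentiableAt).differentiableWithinAt
    · intro s hs
      rw [interior_Icc] at hs
      rw [(hGderiv s hs.1.le).deriv]
      have hb := hbound s hs.1.le
      ring_nf at hb ⊢
      linarith
  have hG01 : G 0 ≤ G 1 := hmono (by norm_num) (by norm_num) zero_le_one
  -- compute G 0 and G 1
  have hx2 : x₁ + (1 : ℝ) • v = x₂ := by
    rw [one_smul, hvdef]; abel
  have ht2 : t₁ + (1 : ℝ) * τ = t₂ := by rw [one_mul, hτdef]; ring
  have hG0 : G 0 = f (x₁, t₁) := by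
    simp [hGdef]
  have hchg : ∫ u in (0:ℝ)..1, ψ u = τ⁻¹ * ∫ t in t₁..t₂, φ t := by
    rw [hψdef]
    rw [intervalIntegral.integral_comp_mul_add φ hτ.ne' t₁]
    norm_num [smul_eq_mul, hτdef]
  have hG1 : G 1 = f (x₂, t₂) + (α / (4 * γ)) * ‖v‖ ^ 2 / τ
      + (τ / α) * (τ⁻¹ * ∫ t in t₁..t₂, φ t) := by
    simp only [hGdef, hx2, ht2, hchg, mul_one]
  rw [hG0, hG1] at hG01
  have hcoef : (τ / α) * (τ⁻¹ * ∫ t in t₁..t₂, φ t) = (1 / α) * ∫ t in t₁..t₂, φ t := by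
    field_simp
  have hnorm : ‖x₁ - x₂‖ = ‖v‖ := by rw [hvdef, norm_sub_rev]
  rw [ge_iff_le, hnorm]
  rw [hcoef] at hG01
  linarith
end

section
/- Let a be a nonzero real number and m > 0. Let f : (0,∞) → ℝ be differentiable and suppose that f′(t) ≥ m·a/(2(e^{−a t} − 1)) + a·f(t) for all t > 0. Then the function F : (0,∞) → ℝ defined by F(t) = e^{−a t}·f(t) + (m/2)·ln|e^{−a t} − 1| is monotone nondecreasing on (0,∞). Equivalently, for all 0 < t₀ ≤ t one has f(t) ≥ e^{a(t−t₀)}·f(t₀) + (m/2)·e^{a t}·ln( (e^{−a t₀} − 1)/(e^{−a t} − 1) ). -/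
/-- ODE comparison core of part (5) of Theorem 2.5, estimate (2.12): if
`f'(t) ≥ m a/(2(e^{-a t}-1)) + a f(t)` on `(0,∞)`, then
`F(t) = e^{-a t} f(t) + (m/2) ln|e^{-a t}-1|` is nondecreasing on `(0,∞)`;
equivalently, for `0 < t₀ ≤ t`,
`f(t) ≥ e^{a(t-t₀)} f(t₀) + (m/2) e^{a t} ln((e^{-a t₀}-1)/(e^{-a t}-1))`. -/
theorem stmt_10 (a : ℝ) (ha : a ≠ 0) (m : ℝ) (hm : 0 < m)
    (f : ℝ → ℝ) (hdiff : ∀ t, 0 < t → DifferentiableAt ℝ f t)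
    (hineq : ∀ t, 0 < t →
      deriv f t ≥ m * a / (2 * (Real.exp (-a * t) - 1)) + a * f t) :
    MonotoneOn (fun t => Real.exp (-a * t) * f t
        + (m / 2) * Real.log |Real.exp (-a * t) - 1|) (Set.Ioi 0) ∧
    ∀ t₀ t, 0 < t₀ → t₀ ≤ t →
      f t ≥ Real.exp (a * (t - t₀)) * f t₀
        + (m / 2) * Real.exp (a * t) *
          Real.log ((Real.exp (-a * t₀) - 1) / (Real.exp (-a * t) - 1)) := by
  have hx : ∀ t : ℝ, 0 < t → Real.exp (-a * t) - 1 ≠ 0 := by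
    intro t ht h
    have h1 : Real.exp (-a * t) = 1 := by linarith
    rw [Real.exp_eq_one_iff] at h1
    have : a * t = 0 := by linarith
    rcases mul_eq_zero.mp this with h | h
    · exact ha h
    · exact ht.ne' h
  -- drop the absolute value
  have funeq : (fun t => Real.exp (-a * t) * f t
        + (m / 2) * Real.log |Real.exp (-a * t) - 1|)
      = (fun t => Real.exp (-a * t) * f t
        + (m / 2) * Real.log (Real.exp (-a * t) - 1)) := by
    funext t; rw [Real.log_abs]
  set g : ℝ → ℝ := fun t => Real.exp (-a * t) * f t
        + (m / 2) * Real.log (Real.exp (-a * t) - 1) with hg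
  have hF : ∀ t, 0 < t → HasDerivAt g
      (Real.exp (-a * t) * (deriv f t - a * f t)
        + (m / 2) * ((-a * Real.exp (-a * t)) / (Real.exp (-a * t) - 1))) t := by
    intro t ht
    have h1 : HasDerivAt (fun s : ℝ => -a * s) (-a) t := by
      simpa using (hasDerivAt_id t).const_mul (-a)
    have hE : HasDerivAt (fun s : ℝ => Real.exp (-a * s)) (-a * Real.exp (-a * t)) t := by
      simpa [mul_comm] using h1.exp
    have hmul : HasDerivAt (fun s => Real.exp (-a * s) * f s)
        (-a * Real.exp (-a * t) * f t + Real.exp (-a * t) * deriv f t) t :=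
      hE.mul (hdiff t ht).hasDerivAt
    have hlog : HasDerivAt (fun s => Real.log (Real.exp (-a * s) - 1))
        ((-a * Real.exp (-a * t)) / (Real.exp (-a * t) - 1)) t :=
      (hE.sub_const 1).log (hx t ht)
    have := hmul.add (hlog.const_mul (m / 2))
    exact this.congr_deriv (by ring)
  have hderiv_nonneg : ∀ t, 0 < t → 0 ≤
      Real.exp (-a * t) * (deriv f t - a * f t)
        + (m / 2) * ((-a * Real.exp (-a * t)) / (Real.exp (-a * t) - 1)) := by
    intro t ht
    have hE : (0:ℝ) < Real.exp (-a * t) := Real.exp_pos _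
    have h1 : deriv f t - a * f t ≥ m * a / (2 * (Real.exp (-a * t) - 1)) := by
      have := hineq t ht; linarith
    have h2 : Real.exp (-a * t) * (m * a / (2 * (Real.exp (-a * t) - 1)))
        ≤ Real.exp (-a * t) * (deriv f t - a * f t) :=
      mul_le_mul_of_nonneg_left h1 hE.le
    have h3 : Real.exp (-a * t) * (m * a / (2 * (Real.exp (-a * t) - 1)))
        + (m / 2) * ((-a * Real.exp (-a * t)) / (Real.exp (-a * t) - 1)) = 0 := by
      field_simp
      ring
    linarith
  have hmono : MonotoneOn g (Set.Ioi 0) := by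
    apply monotoneOn_of_deriv_nonneg (convex_Ioi 0)
    · exact fun t ht => ((hF t ht).continuousAt).continuousWithinAt
    · intro t ht
      rw [interior_Ioi] at ht
      exact ((hF t ht).differentiableAt).differentiableWithinAt
    · intro t ht
      rw [interior_Ioi] at ht
      rw [(hF t ht).deriv]
      exact hderiv_nonneg t ht
  constructor
  · rw [funeq]; exact hmono
  · intro t₀ t ht₀ htt
    have ht : 0 < t := lt_of_lt_of_le ht₀ htt
    have hle : g t₀ ≤ g t := hmono (Set.mem_Ioi.mpr ht₀) (Set.mem_Ioi.mpr ht) htt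
    have hEt : (0:ℝ) < Real.exp (a * t) := Real.exp_pos _
    have hEE : Real.exp (a * t) * Real.exp (-a * t) = 1 := by
      rw [← Real.exp_add]; ring_nf; exact Real.exp_zero
    have hE0 : Real.exp (a * t) * Real.exp (-a * t₀) = Real.exp (a * (t - t₀)) := by
      rw [← Real.exp_add]; ring_nf
    have hlogdiv : Real.log ((Real.exp (-a * t₀) - 1) / (Real.exp (-a * t) - 1))
        = Real.log (Real.exp (-a * t₀) - 1) - Real.log (Real.exp (-a * t) - 1) :=
      Real.log_div (hx t₀ ht₀) (hx t ht)
    have hmul := mul_le_mul_of_nonneg_left hle hEt.le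
    simp only [hg] at hmul
    rw [hlogdiv]
    have key1 : Real.exp (a * t) * (Real.exp (-a * t₀) * f t₀
        + m / 2 * Real.log (Real.exp (-a * t₀) - 1))
        = Real.exp (a * (t - t₀)) * f t₀
          + m / 2 * Real.exp (a * t) * Real.log (Real.exp (-a * t₀) - 1) := by
      linear_combination f t₀ * hE0
    have key2 : Real.exp (a * t) * (Real.exp (-a * t) * f t
        + m / 2 * Real.log (Real.exp (-a * t) - 1))
        = f t + m / 2 * Real.exp (a * t) * Real.log (Real.exp (-a * t) - 1) := by
      linear_combination f t * hEE
    rw [key1, key2] at hmul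
    linarith
end

section
/- Let a > 0, m > 0 and δ > m/2. Let f : (0,∞) → ℝ be differentiable with f′(t) ≥ m·a/(2(e^{−a t} − 1)) + a·f(t) for all t > 0, and suppose f(t) ≥ δ for all t > 0. Set t₀ = (1/a)·ln((δ + m/2)/(δ − m/2)) and c = (δ/2 − m/4)·e^{−a t₀}. Then c > 0 and f(t) ≥ −(m/2)·e^{a t}·ln(1 − e^{−a t}) + c·e^{a t} for all t ≥ t₀. -/
/-- Quantitative growth estimate of part (4a) of Theorem 2.5: if `a > 0`,
`m > 0`, `δ > m/2`, `f'(t) ≥ m a/(2(e^{-a t}-1)) + a f(t)` on `(0,∞)` and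
`f ≥ δ`, then with `t₀ = (1/a) ln((δ+m/2)/(δ-m/2))` and
`c = (δ/2 - m/4) e^{-a t₀}` one has `c > 0` and
`f(t) ≥ -(m/2) e^{a t} ln(1-e^{-a t}) + c e^{a t}` for `t ≥ t₀`. -/
theorem stmt_13 (a m δ : ℝ) (ha : 0 < a) (hm : 0 < m) (hδ : m / 2 < δ)
    (f : ℝ → ℝ) (hdiff : ∀ t, 0 < t → DifferentiableAt ℝ f t)
    (hineq : ∀ t, 0 < t →
      deriv f t ≥ m * a / (2 * (Real.exp (-a * t) - 1)) + a * f t)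
    (hlower : ∀ t, 0 < t → δ ≤ f t)
    (t₀ c : ℝ)
    (ht₀ : t₀ = (1 / a) * Real.log ((δ + m / 2) / (δ - m / 2)))
    (hc : c = (δ / 2 - m / 4) * Real.exp (-a * t₀)) :
    0 < c ∧ ∀ t, t₀ ≤ t →
      f t ≥ -(m / 2) * Real.exp (a * t) * Real.log (1 - Real.exp (-a * t))
        + c * Real.exp (a * t) := by
  have hd : (0:ℝ) < δ - m / 2 := by linarith
  have hs : (0:ℝ) < δ + m / 2 := by linarith
  have hcpos : 0 < c := by
    rw [hc]
    have := Real.exp_pos (-a * t₀)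
    nlinarith
  refine ⟨hcpos, ?_⟩
  -- t₀ > 0
  have ht₀pos : 0 < t₀ := by
    rw [ht₀]
    have h1 : (1:ℝ) < (δ + m / 2) / (δ - m / 2) := (one_lt_div hd).mpr (by linarith)
    have := Real.log_pos h1
    positivity
  -- value of exp(-a t₀)
  have hat₀ : -a * t₀ = Real.log ((δ - m / 2) / (δ + m / 2)) := by
    rw [ht₀]
    rw [show (δ - m / 2) / (δ + m / 2) = ((δ + m / 2) / (δ - m / 2))⁻¹ by
      rw [inv_div]]
    rw [Real.log_inv]
    field_simp
  have hx : Real.exp (-a * t₀) = (δ - m / 2) / (δ + m / 2) := by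
    rw [hat₀, Real.exp_log (by positivity)]
  set g : ℝ → ℝ := fun t =>
    Real.exp (-a * t) * f t + m / 2 * Real.log (1 - Real.exp (-a * t)) with hg
  have hEpos : ∀ t : ℝ, 0 < t → 0 < 1 - Real.exp (-a * t) := by
    intro t ht
    have : Real.exp (-a * t) < 1 := by
      rw [Real.exp_lt_one_iff]
      nlinarith
    linarith
  -- derivative of g
  have hgderiv : ∀ t : ℝ, 0 < t → HasDerivAt g
      (Real.exp (-a * t) * (deriv f t - a * f t)
        + m / 2 * (a * Real.exp (-a * t) / (1 - Real.exp (-a * t)))) t := by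
    intro t ht
    have he : HasDerivAt (fun t : ℝ => Real.exp (-a * t))
        (Real.exp (-a * t) * (-a)) t := by
      have h1 : HasDerivAt (fun t : ℝ => -a * t) (-a) t := by
        simpa using (hasDerivAt_id t).const_mul (-a)
      exact h1.exp
    have hf := (hdiff t ht).hasDerivAt
    have hmul := he.mul hf
    have hinner : HasDerivAt (fun t : ℝ => 1 - Real.exp (-a * t))
        (0 - Real.exp (-a * t) * (-a)) t := (hasDerivAt_const t 1).sub he
    have hlog := hinner.log (ne_of_gt (hEpos t ht))
    have := hmul.add ((hlog.const_mul (m / 2)))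
    convert this using 1
    · rfl
    · rfl
    · rfl
    have hne := ne_of_gt (hEpos t ht)
    ring
  -- derivative nonneg
  have hDnonneg : ∀ t : ℝ, 0 < t →
      0 ≤ Real.exp (-a * t) * (deriv f t - a * f t)
        + m / 2 * (a * Real.exp (-a * t) / (1 - Real.exp (-a * t))) := by
    intro t ht
    set E := Real.exp (-a * t) with hE
    have hE0 : 0 < E := Real.exp_pos _
    have hE1 : 0 < 1 - E := hEpos t ht
    have h1 : m * a / (2 * (E - 1)) ≤ deriv f t - a * f t := by
      have := hineq t ht; linarith
    have key : E * (m * a / (2 * (E - 1))) + m / 2 * (a * E / (1 - E)) = 0 := by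
      have h2 : E - 1 ≠ 0 := by linarith
      have h3 : (1 : ℝ) - E ≠ 0 := by linarith
      field_simp
      ring
    have h4 : E * (m * a / (2 * (E - 1))) ≤ E * (deriv f t - a * f t) :=
      mul_le_mul_of_nonneg_left h1 hE0.le
    linarith
  -- g monotone on Ici t₀
  have hmono : MonotoneOn g (Set.Ici t₀) := by
    apply monotoneOn_of_deriv_nonneg (convex_Ici t₀)
    · intro t htmem
      have ht : 0 < t := lt_of_lt_of_le ht₀pos htmem
      exact ((hgderiv t ht).differentiableAt.continuousAt).continuousWithinAt
    · intro t htmem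
      rw [interior_Ici] at htmem
      have ht : 0 < t := lt_trans ht₀pos htmem
      exact ((hgderiv t ht).differentiableAt).differentiableWithinAt
    · intro t htmem
      rw [interior_Ici] at htmem
      have ht : 0 < t := lt_trans ht₀pos htmem
      rw [(hgderiv t ht).deriv]
      exact hDnonneg t ht
  -- g t₀ ≥ c
  have hgt₀ : c ≤ g t₀ := by
    have hx1 : 1 - Real.exp (-a * t₀) = m / (δ + m / 2) := by
      rw [hx, eq_div_iff (ne_of_gt hs), sub_mul, one_mul,
        div_mul_cancel₀ _ (ne_of_gt hs)]; ring
    have hxs : Real.exp (-a * t₀) * (δ + m / 2) = δ - m / 2 := by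
      rw [hx]; exact div_mul_cancel₀ _ (ne_of_gt hs)
    have hlog2 : -(  (δ - m / 2) / 2) ≤ m / 2 * Real.log (m / (δ + m / 2)) := by
      have h5 : Real.log ((δ + m / 2) / m) ≤ (δ + m / 2) / m - 1 :=
        Real.log_le_sub_one_of_pos (by positivity)
      have h6 : Real.log (m / (δ + m / 2)) = -Real.log ((δ + m / 2) / m) := by
        rw [show m / (δ + m / 2) = ((δ + m / 2) / m)⁻¹ by rw [inv_div],
          Real.log_inv]
      rw [h6]
      have h7 : (δ + m / 2) / m - 1 = (δ - m / 2) / m := by field_simp; ring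
      rw [h7] at h5
      have h8 : m / 2 * Real.log ((δ + m / 2) / m) ≤ m / 2 * ((δ - m / 2) / m) :=
        mul_le_mul_of_nonneg_left h5 (by positivity)
      have h9 : m / 2 * ((δ - m / 2) / m) = (δ - m / 2) / 2 := by
        field_simp
      linarith
    have hf0 : Real.exp (-a * t₀) * δ ≤ Real.exp (-a * t₀) * f t₀ :=
      mul_le_mul_of_nonneg_left (hlower t₀ ht₀pos) (Real.exp_pos _).le
    have h2 : Real.exp (-a * t₀) * (δ / 2 + m / 4) = (δ - m / 2) / 2 := by
      linear_combination hxs / 2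
    rw [hg]
    simp only
    rw [hx1, hc]
    nlinarith
  -- conclude
  intro t ht
  have htpos : 0 < t := lt_of_lt_of_le ht₀pos ht
  have hgt : c ≤ g t := le_trans hgt₀ (hmono (Set.self_mem_Ici) ht ht)
  have hEE : Real.exp (a * t) * Real.exp (-a * t) = 1 := by
    rw [← Real.exp_add]; simp
  have h10 := mul_le_mul_of_nonneg_left hgt (Real.exp_pos (a * t)).le
  rw [hg] at h10
  simp only at h10
  have h11 : Real.exp (a * t) * (Real.exp (-a * t) * f t
      + m / 2 * Real.log (1 - Real.exp (-a * t)))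
      = f t + m / 2 * (Real.exp (a * t) * Real.log (1 - Real.exp (-a * t))) := by
    linear_combination f t * hEE
  linarith [h10, h11]
end

section
/- Let a < 0. For every T > 0 and every η ∈ (0, 1/4] there exists ε₀ > 0 such that for every ε ∈ (0, ε₀) there exists a differentiable function m : [0,T] → ℝ with m(0) = ε, m′(t) = m(t)·(m(t)+1)·(−a)·3(e^{−a t} − 1)/(3e^{−a t} − 1) for all t ∈ [0,T], and |m(t)| ≤ η for all t ∈ [0,T]; moreover any two such solutions with the same initial value ε agree on [0,T]. -/
open Set

set_option maxHeartbeats 1000000 in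
private lemma stmt_14_alg (E C A : ℝ) (hD0 : 3*E - 1 ≠ 0)
    (hQ : (3*E-1)^2 - C*E^3 ≠ 0) :
    (C*E^3/(3*E-1)^2) / (1 - C*E^3/(3*E-1)^2) *
      ((C*E^3/(3*E-1)^2) / (1 - C*E^3/(3*E-1)^2) + 1) * A * (3*(E-1)/(3*E-1))
    = ((C * (3*E^2*(E*A)) * (3*E-1)^2 - C*E^3*(2*(3*E-1)*(3*(E*A)))) / ((3*E-1)^2)^2
          * (1 - C*E^3/(3*E-1)^2)
       - C*E^3/(3*E-1)^2 *
          (0 - (C * (3*E^2*(E*A)) * (3*E-1)^2 - C*E^3*(2*(3*E-1)*(3*(E*A)))) / ((3*E-1)^2)^2))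
      / (1 - C*E^3/(3*E-1)^2)^2 := by
  have h1 : 1 - C*E^3/(3*E-1)^2 = ((3*E-1)^2 - C*E^3)/(3*E-1)^2 := by
    rw [one_sub_div (pow_ne_zero 2 hD0)]
  rw [h1]
  generalize hD : 3*E - 1 = D at *
  generalize hQQ : D^2 - C*E^3 = Q at *
  field_simp
  rw [← hQQ, ← hD]
  ring

/-- The explicit solution has the required derivative. -/
private lemma stmt_14_deriv (a : ℝ) (ha : a < 0) (C : ℝ) (t T : ℝ) (ht : t ∈ Icc 0 T)
    (hψ : 1 - C * Real.exp (-a*t)^3 / (3*Real.exp (-a*t) - 1)^2 ≠ 0) :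
    HasDerivAt (fun t => (C * Real.exp (-a*t)^3 / (3*Real.exp (-a*t) - 1)^2) /
        (1 - C * Real.exp (-a*t)^3 / (3*Real.exp (-a*t) - 1)^2))
      (((C * Real.exp (-a*t)^3 / (3*Real.exp (-a*t) - 1)^2) /
        (1 - C * Real.exp (-a*t)^3 / (3*Real.exp (-a*t) - 1)^2)) *
        (((C * Real.exp (-a*t)^3 / (3*Real.exp (-a*t) - 1)^2) /
        (1 - C * Real.exp (-a*t)^3 / (3*Real.exp (-a*t) - 1)^2)) + 1) * (-a) *
        (3 * (Real.exp (-a * t) - 1) / (3 * Real.exp (-a * t) - 1))) t := by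
  have hE : (1:ℝ) ≤ Real.exp (-a*t) := by
    rw [← Real.exp_zero]
    exact Real.exp_le_exp.2 (by nlinarith [ht.1])
  have hD0 : 3*Real.exp (-a*t) - 1 ≠ 0 := by nlinarith
  have hDe : HasDerivAt (fun t : ℝ => Real.exp (-a*t)) (Real.exp (-a*t) * (-a)) t := by
    simpa using ((hasDerivAt_id t).const_mul (-a)).exp
  have hN : HasDerivAt (fun t : ℝ => C * Real.exp (-a*t)^3)
      (C * (3 * Real.exp (-a*t)^2 * (Real.exp (-a*t) * (-a)))) t := by
    simpa using (hDe.pow 3).const_mul C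
  have hDen : HasDerivAt (fun t : ℝ => (3*Real.exp (-a*t) - 1)^2)
      (2 * (3*Real.exp (-a*t) - 1) * (3 * (Real.exp (-a*t) * (-a)))) t := by
    have := (((hDe.const_mul 3).sub_const 1).pow 2)
    simpa [Pi.pow_def, mul_comm, mul_assoc, mul_left_comm] using this
  have hψd := hN.div hDen (pow_ne_zero 2 hD0)
  have hmd := hψd.div ((hasDerivAt_const t (1:ℝ)).sub hψd) hψ
  have hQ : (3*Real.exp (-a*t) - 1)^2 - C * Real.exp (-a*t)^3 ≠ 0 := fun h =>
    hψ (by rw [sub_eq_zero, eq_comm, div_eq_one_iff_eq (pow_ne_zero 2 hD0)]; linarith)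
  rw [stmt_14_alg (Real.exp (-a*t)) C (-a) hD0 hQ]
  exact hmd

set_option maxHeartbeats 1000000 in
/-- Claim 2 in the proof of Theorem 2.3 (case `a < 0`): for every `T > 0` and
every tolerance `η ∈ (0, 1/4]`, for all sufficiently small `ε > 0` the Cauchy
problem `m' = m(m+1)(-a)·3(e^{-a t}-1)/(3e^{-a t}-1)`, `m(0) = ε`, has a
solution on `[0,T]` staying in `[-η, η]`, and this solution is unique. -/
theorem stmt_14 (a : ℝ) (ha : a < 0) :
    ∀ T > (0 : ℝ), ∀ η : ℝ, 0 < η → η ≤ 1 / 4 →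
      ∃ ε₀ > (0 : ℝ), ∀ ε : ℝ, 0 < ε → ε < ε₀ →
        (∃ m : ℝ → ℝ, m 0 = ε ∧
          (∀ t ∈ Set.Icc 0 T, HasDerivWithinAt m
            (m t * (m t + 1) * (-a) *
              (3 * (Real.exp (-a * t) - 1) / (3 * Real.exp (-a * t) - 1)))
            (Set.Icc 0 T) t) ∧
          (∀ t ∈ Set.Icc 0 T, |m t| ≤ η)) ∧
        (∀ m₁ m₂ : ℝ → ℝ, m₁ 0 = ε → m₂ 0 = ε →
          (∀ t ∈ Set.Icc 0 T, HasDerivWithinAt m₁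
            (m₁ t * (m₁ t + 1) * (-a) *
              (3 * (Real.exp (-a * t) - 1) / (3 * Real.exp (-a * t) - 1)))
            (Set.Icc 0 T) t) →
          (∀ t ∈ Set.Icc 0 T, HasDerivWithinAt m₂
            (m₂ t * (m₂ t + 1) * (-a) *
              (3 * (Real.exp (-a * t) - 1) / (3 * Real.exp (-a * t) - 1)))
            (Set.Icc 0 T) t) →
          Set.EqOn m₁ m₂ (Set.Icc 0 T)) := by
  intro T hT η hη hη4
  have hexpT : (1:ℝ) ≤ Real.exp (-a*T) := by
    rw [← Real.exp_zero]; exact Real.exp_le_exp.2 (by nlinarith)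
  refine ⟨η / (2 * Real.exp (-a*T)^3), by positivity, ?_⟩
  intro ε hε hεlt
  constructor
  · -- existence
    have hε1 : (0:ℝ) < ε + 1 := by linarith
    set C : ℝ := 4*ε/(ε+1) with hC
    have hC0 : 0 < C := by positivity
    have hC4 : C ≤ 4*ε := by
      rw [hC, div_le_iff₀ hε1]; nlinarith
    set ψ : ℝ → ℝ := fun t => C * Real.exp (-a*t)^3 / (3*Real.exp (-a*t) - 1)^2 with hψdef
    -- bounds on ψ on [0,T]
    have hψb : ∀ t ∈ Icc (0:ℝ) T, 0 ≤ ψ t ∧ ψ t ≤ η/2 := by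
      intro t ht
      have hE1 : (1:ℝ) ≤ Real.exp (-a*t) := by
        rw [← Real.exp_zero]; exact Real.exp_le_exp.2 (by nlinarith [ht.1])
      have hET : Real.exp (-a*t) ≤ Real.exp (-a*T) := Real.exp_le_exp.2 (by nlinarith [ht.2])
      have hnum : C * Real.exp (-a*t)^3 ≤ 4*ε * Real.exp (-a*T)^3 := by
        have h3 : Real.exp (-a*t)^3 ≤ Real.exp (-a*T)^3 :=
          pow_le_pow_left₀ (by positivity) hET 3
        exact mul_le_mul hC4 h3 (by positivity) (by nlinarith)
      have hden : (4:ℝ) ≤ (3*Real.exp (-a*t) - 1)^2 := by nlinarith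
      have h1 : ψ t ≤ 4*ε * Real.exp (-a*T)^3 / 4 := by
        apply div_le_div₀ (by positivity) hnum (by norm_num) hden
      have h2 : 4*ε * Real.exp (-a*T)^3 / 4 = ε * Real.exp (-a*T)^3 := by ring
      have h3 : ε * Real.exp (-a*T)^3 < η/2 := by
        have h := (lt_div_iff₀ (by positivity : (0:ℝ) < 2 * Real.exp (-a*T)^3)).mp hεlt
        nlinarith [h]
      exact ⟨by positivity, by linarith⟩
    have hψ8 : ∀ t ∈ Icc (0:ℝ) T, ψ t ≤ 1/8 := fun t ht => by
      have := (hψb t ht).2; linarith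
    have h1ψ : ∀ t ∈ Icc (0:ℝ) T, 1 - ψ t ≠ 0 := fun t ht => by
      have := hψ8 t ht; intro h; linarith
    refine ⟨fun t => ψ t / (1 - ψ t), ?_, ?_, ?_⟩
    · -- initial value
      have he0 : Real.exp (-a*(0:ℝ)) = 1 := by norm_num
      have hne : ε + 1 ≠ 0 := ne_of_gt hε1
      show ψ 0 / (1 - ψ 0) = ε
      have hψ0 : ψ 0 = ε/(ε+1) := by
        simp only [hψdef, he0, one_pow, mul_one, hC]
        norm_num
        rw [div_div]
        rw [div_eq_div_iff (by positivity) hne]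
        ring
      rw [hψ0]
      have h1 : 1 - ε/(ε+1) = 1/(ε+1) := by field_simp; ring
      rw [h1]
      field_simp
    · -- derivative
      intro t ht
      exact (stmt_14_deriv a ha C t T ht (h1ψ t ht)).hasDerivWithinAt
    · -- bound
      intro t ht
      obtain ⟨hψ0, hψη⟩ := hψb t ht
      have h8 := hψ8 t ht
      have hpos : (0:ℝ) < 1 - ψ t := by linarith
      rw [abs_le]
      constructor
      · have : 0 ≤ ψ t / (1 - ψ t) := by positivity
        linarith
      · rw [div_le_iff₀ hpos]
        nlinarith
  · -- uniqueness
    intro m₁ m₂ h₁0 h₂0 h₁ h₂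
    have hc₁ : ContinuousOn m₁ (Icc 0 T) := fun t ht => (h₁ t ht).continuousWithinAt
    have hc₂ : ContinuousOn m₂ (Icc 0 T) := fun t ht => (h₂ t ht).continuousWithinAt
    obtain ⟨R₁, hR₁⟩ := isCompact_Icc.exists_bound_of_continuousOn hc₁
    obtain ⟨R₂, hR₂⟩ := isCompact_Icc.exists_bound_of_continuousOn hc₂
    set R : ℝ := max R₁ R₂ with hRdef
    have hR0 : 0 ≤ R := le_trans (norm_nonneg (m₁ 0)) (le_trans (hR₁ 0 ⟨le_refl _, le_of_lt hT⟩) (le_max_left _ _))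
    set τ : ℝ → ℝ := fun t => min (max t 0) T with hτdef
    have hτmem : ∀ t, τ t ∈ Icc (0:ℝ) T := fun t =>
      ⟨le_min (le_max_right t 0) (le_of_lt hT), min_le_right _ _⟩
    have hτeq : ∀ t ∈ Icc (0:ℝ) T, τ t = t := fun t ht => by
      simp only [hτdef]; rw [max_eq_left ht.1, min_eq_left ht.2]
    set v : ℝ → ℝ → ℝ := fun t x => x * (x + 1) * (-a) *
        (3 * (Real.exp (-a * τ t) - 1) / (3 * Real.exp (-a * τ t) - 1)) with hvdef
    set G : ℝ := (-a) * 3 * Real.exp (-a*T) with hGdef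
    have hG0 : 0 ≤ G := by
      have := Real.exp_pos (-a*T); rw [hGdef]; nlinarith
    have hgbound : ∀ t : ℝ, |(-a) * (3 * (Real.exp (-a * τ t) - 1) / (3 * Real.exp (-a * τ t) - 1))| ≤ G := by
      intro t
      obtain ⟨ht0, htT⟩ := hτmem t
      have hE1 : (1:ℝ) ≤ Real.exp (-a * τ t) := by
        rw [← Real.exp_zero]; exact Real.exp_le_exp.2 (by nlinarith)
      have hET : Real.exp (-a * τ t) ≤ Real.exp (-a*T) := Real.exp_le_exp.2 (by nlinarith)
      have hD2 : (2:ℝ) ≤ 3 * Real.exp (-a * τ t) - 1 := by linarith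
      have hq0 : 0 ≤ 3 * (Real.exp (-a * τ t) - 1) / (3 * Real.exp (-a * τ t) - 1) := by
        apply div_nonneg <;> linarith
      have hq : 3 * (Real.exp (-a * τ t) - 1) / (3 * Real.exp (-a * τ t) - 1) ≤ 3 * Real.exp (-a*T) := by
        rw [div_le_iff₀ (by linarith)]
        nlinarith
      rw [abs_of_nonneg (by nlinarith)]
      rw [hGdef]
      nlinarith
    set L : ℝ := (2*R+1) * G with hLdef
    have hL0 : 0 ≤ L := by positivity
    have hv : ∀ t, LipschitzOnWith L.toNNReal (v t) (Metric.closedBall (0:ℝ) R) := by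
      intro t
      apply LipschitzOnWith.of_dist_le_mul
      intro x hx y hy
      rw [Metric.mem_closedBall, Real.dist_eq, sub_zero] at hx hy
      rw [Real.dist_eq, Real.dist_eq]
      have key : v t x - v t y = (x - y) * ((x + y + 1) *
          ((-a) * (3 * (Real.exp (-a * τ t) - 1) / (3 * Real.exp (-a * τ t) - 1)))) := by
        rw [hvdef]; ring
      rw [key, abs_mul, abs_mul]
      have h1 : |x + y + 1| ≤ 2*R+1 := by
        rw [abs_le] at hx hy ⊢; constructor <;> linarith [hx.1, hx.2, hy.1, hy.2]
      have h2 := hgbound t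
      have := Real.coe_toNNReal L hL0
      rw [this, hLdef]
      have habs : 0 ≤ |x - y| := abs_nonneg _
      calc |x - y| * (|x + y + 1| * |(-a) * (3 * (Real.exp (-a * τ t) - 1) / (3 * Real.exp (-a * τ t) - 1))|)
          ≤ |x - y| * ((2*R+1) * G) := by
            apply mul_le_mul_of_nonneg_left _ habs
            exact mul_le_mul h1 h2 (abs_nonneg _) (by linarith)
        _ = (2*R+1) * G * |x - y| := by ring
    have hmemball : ∀ (f : ℝ → ℝ), (∀ x ∈ Icc (0:ℝ) T, ‖f x‖ ≤ R) →
        ∀ t ∈ Ico (0:ℝ) T, f t ∈ Metric.closedBall (0:ℝ) R := by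
      intro f hf t ht
      rw [Metric.mem_closedBall, Real.dist_eq, sub_zero]
      exact hf t (Ico_subset_Icc_self ht)
    have hderiv : ∀ (f : ℝ → ℝ),
        (∀ t ∈ Icc (0:ℝ) T, HasDerivWithinAt f
          (f t * (f t + 1) * (-a) *
            (3 * (Real.exp (-a * t) - 1) / (3 * Real.exp (-a * t) - 1))) (Icc 0 T) t) →
        ∀ t ∈ Ico (0:ℝ) T, HasDerivWithinAt f (v t (f t)) (Ici t) t := by
      intro f hf t ht
      have hmem : Icc (0:ℝ) T ∈ nhdsWithin t (Ici t) := by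
        rw [mem_nhdsWithin]
        exact ⟨Iio T, isOpen_Iio, ht.2, fun x hx => ⟨le_trans ht.1 hx.2, le_of_lt hx.1⟩⟩
      have := (hf t (Ico_subset_Icc_self ht)).mono_of_mem_nhdsWithin hmem
      have hveq : v t (f t) = f t * (f t + 1) * (-a) *
          (3 * (Real.exp (-a * t) - 1) / (3 * Real.exp (-a * t) - 1)) := by
        rw [hvdef]
        simp only [hτeq t (Ico_subset_Icc_self ht)]
      rw [hveq]
      exact this
    have hmem₁ : ∀ x ∈ Icc (0:ℝ) T, ‖m₁ x‖ ≤ R := fun x hx => le_trans (hR₁ x hx) (le_max_left _ _)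
    have hmem₂ : ∀ x ∈ Icc (0:ℝ) T, ‖m₂ x‖ ≤ R := fun x hx => le_trans (hR₂ x hx) (le_max_right _ _)
    exact ODE_solution_unique_of_mem_Icc_right (fun t _ => hv t) hc₁ (hderiv m₁ h₁) (hmemball m₁ hmem₁)
      hc₂ (hderiv m₂ h₂) (hmemball m₂ hmem₂) (by rw [h₁0, h₂0])
end

section
/- Let a₁ > 0 and p₁ < 1. Then there is no differentiable function u : (−∞, 0] → ℝ such that u(t) > 0 and u′(t) ≥ a₁·u(t)^{p₁} for all t ≤ 0. -/
/-- ODE nonexistence core of part (c) of Theorem 2.8: if `a₁ > 0` and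
`p₁ < 1`, there is no positive differentiable function `u` on `(-∞, 0]`
satisfying `u'(t) ≥ a₁ u(t)^{p₁}` for all `t ≤ 0`. -/
theorem stmt_15 (a₁ p₁ : ℝ) (ha : 0 < a₁) (hp : p₁ < 1) :
    ¬ ∃ u u' : ℝ → ℝ, ∀ t ≤ (0 : ℝ),
      0 < u t ∧ HasDerivWithinAt u (u' t) (Set.Iic 0) t ∧
      u' t ≥ a₁ * u t ^ p₁ := by
  rintro ⟨u, u', h⟩
  set c : ℝ := 1 - p₁ with hc
  have hc0 : 0 < c := by simp [hc]; linarith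
  set g : ℝ → ℝ := fun t => u t ^ c / c - a₁ * t with hg
  have hderiv : ∀ t ≤ (0:ℝ), HasDerivWithinAt g
      (u' t * c * u t ^ (c - 1) / c - a₁) (Set.Iic 0) t := by
    intro t ht
    have h1 := ((h t ht).2.1.rpow_const (p := c) (Or.inl (ne_of_gt (h t ht).1))).div_const c
    have h2 : HasDerivWithinAt (fun s : ℝ => a₁ * s) a₁ (Set.Iic 0) t := by
      simpa using (hasDerivWithinAt_id t (Set.Iic 0)).const_mul a₁
    exact h1.sub h2
  have hd_nonneg : ∀ t ≤ (0:ℝ), 0 ≤ u' t * c * u t ^ (c - 1) / c - a₁ := by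
    intro t ht
    obtain ⟨hu, _, hge⟩ := h t ht
    have hne : u t ^ (c - 1) > 0 := Real.rpow_pos_of_pos hu _
    have key : u' t * u t ^ (c - 1) ≥ a₁ := by
      have := mul_le_mul_of_nonneg_right hge (le_of_lt hne)
      have heq : u t ^ p₁ * u t ^ (c - 1) = 1 := by
        rw [← Real.rpow_add hu]
        simp [hc]
      calc a₁ = a₁ * (u t ^ p₁ * u t ^ (c - 1)) := by rw [heq]; ring
        _ = a₁ * u t ^ p₁ * u t ^ (c - 1) := by ring
        _ ≤ u' t * u t ^ (c - 1) := this
    have : u' t * c * u t ^ (c - 1) / c = u' t * u t ^ (c - 1) := by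
      field_simp
    rw [this]
    linarith
  have hmono : MonotoneOn g (Set.Iic 0) := by
    apply monotoneOn_of_hasDerivWithinAt_nonneg (convex_Iic 0)
      (f' := fun t => u' t * c * u t ^ (c - 1) / c - a₁)
    · intro t ht
      exact (hderiv t ht).continuousWithinAt
    · intro t ht
      rw [interior_Iic] at ht ⊢
      exact (hderiv t (le_of_lt ht)).mono Set.Iio_subset_Iic_self
    · intro t ht
      rw [interior_Iic] at ht
      exact hd_nonneg t (le_of_lt ht)
  set T : ℝ := -(u 0 ^ c / c) / a₁ - 1 with hT
  have hv0 : 0 < u 0 ^ c / c := div_pos (Real.rpow_pos_of_pos (h 0 le_rfl).1 c) hc0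
  have hT0 : T ≤ 0 := by
    have : 0 ≤ u 0 ^ c / c / a₁ := le_of_lt (div_pos hv0 ha)
    simp only [hT]
    rw [neg_div]
    linarith
  have hgl := hmono (Set.mem_Iic.mpr hT0) (Set.mem_Iic.mpr le_rfl) hT0
  have hvT : 0 < u T ^ c / c := div_pos (Real.rpow_pos_of_pos (h T hT0).1 c) hc0
  have hgT : g T = u T ^ c / c - a₁ * T := rfl
  have hg0 : g 0 = u 0 ^ c / c := by simp [hg]
  rw [hgT, hg0] at hgl
  have : a₁ * T = -(u 0 ^ c / c) - a₁ := by
    simp only [hT]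
    field_simp
  nlinarith
end

section
/- Let K > 0 and m > 0. Define on (0,∞): α(t) = 1 + (2/3)Kt, φ(t) = (m/2)·(1/t + K + (1/3)K²t), c(t) = (m/2)·(1/t + K), and β(t) = tanh(Kt). Then for all t > 0: (i) (4/m)·c(t) − 2K ≥ (1/α(t))·((4/m)·c(t) − α′(t)) (with equality); (ii) φ′(t) − (2/m)·c(t)² + (φ(t)/α(t))·((4/m)·c(t) − α′(t)) ≥ 0 (with equality); (iii) α′(t)/α(t) + β′(t)/β(t) − 4φ(t)/(m·α(t)²) ≤ 0. -/
set_option maxHeartbeats 1000000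

private lemma cosh_lb (x : ℝ) (hx : 0 ≤ x) : 1 + x ^ 2 / 2 ≤ Real.cosh x := by
  have h : ∀ y ∈ Set.Ici (0:ℝ), 0 ≤ deriv (fun z => Real.cosh z - (1 + z ^ 2 / 2)) y := by
    intro y hy
    have : deriv (fun z => Real.cosh z - (1 + z ^ 2 / 2)) y = Real.sinh y - y := by
      have h1 : HasDerivAt (fun z : ℝ => Real.cosh z - (1 + z ^ 2 / 2))
          (Real.sinh y - (0 + 2 * y ^ 1 / 2)) y := by
        exact (Real.hasDerivAt_cosh y).sub
          ((hasDerivAt_const y 1).add ((hasDerivAt_pow 2 y).div_const 2))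
      simpa using h1.deriv
    rw [this, sub_nonneg]
    exact Real.self_le_sinh_iff.2 hy
  have hmono : MonotoneOn (fun z => Real.cosh z - (1 + z ^ 2 / 2)) (Set.Ici 0) := by
    apply monotoneOn_of_deriv_nonneg (convex_Ici 0)
    · exact (Real.continuous_cosh.sub (by continuity)).continuousOn
    · intro y hy
      exact (Real.differentiable_cosh y).sub (by fun_prop) |>.differentiableWithinAt
    · intro y hy
      exact h y (interior_subset hy)
  have := hmono (Set.self_mem_Ici) hx hx
  simp [Real.cosh_zero] at this
  linarith

private lemma sinh_lb (x : ℝ) (hx : 0 ≤ x) : x + x ^ 3 / 6 ≤ Real.sinh x := by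
  have h : ∀ y ∈ Set.Ici (0:ℝ), 0 ≤ deriv (fun z => Real.sinh z - (z + z ^ 3 / 6)) y := by
    intro y hy
    have : deriv (fun z => Real.sinh z - (z + z ^ 3 / 6)) y
        = Real.cosh y - (1 + y ^ 2 / 2) := by
      have h1 : HasDerivAt (fun z : ℝ => Real.sinh z - (z + z ^ 3 / 6))
          (Real.cosh y - (1 + 3 * y ^ 2 / 6)) y := by
        exact (Real.hasDerivAt_sinh y).sub
          ((hasDerivAt_id y).add ((hasDerivAt_pow 3 y).div_const 6))
      have := h1.deriv
      rw [this]; ring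
    rw [this, sub_nonneg]
    exact cosh_lb y hy
  have hmono : MonotoneOn (fun z => Real.sinh z - (z + z ^ 3 / 6)) (Set.Ici 0) := by
    apply monotoneOn_of_deriv_nonneg (convex_Ici 0)
    · exact (Real.continuous_sinh.sub (by continuity)).continuousOn
    · intro y hy
      exact (Real.differentiable_sinh y).sub (by fun_prop) |>.differentiableWithinAt
    · intro y hy
      exact h y (interior_subset hy)
  have := hmono (Set.self_mem_Ici) hx hx
  simp [Real.sinh_zero] at this
  linarith

/-- The linear Li–Xu type solution (7.7) of the A₃-system (with `γ ≡ 1`) for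
the heat equation under curvature lower bound `-K`: properties of
`α(t) = 1 + (2/3)Kt`, `φ(t) = (m/2)(1/t + K + (1/3)K²t)`,
`c(t) = (m/2)(1/t + K)`, `β(t) = tanh(Kt)`. -/
theorem stmt_18 (K m : ℝ) (hK : 0 < K) (hm : 0 < m)
    (α φ c β : ℝ → ℝ)
    (hα : ∀ t, α t = 1 + (2 / 3) * K * t)
    (hφ : ∀ t, φ t = (m / 2) * (1 / t + K + (1 / 3) * K ^ 2 * t))
    (hc : ∀ t, c t = (m / 2) * (1 / t + K))
    (hβ : ∀ t, β t = Real.tanh (K * t)) :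
    (∀ t, 0 < t →
      (4 / m) * c t - 2 * K = (1 / α t) * ((4 / m) * c t - deriv α t)) ∧
    (∀ t, 0 < t →
      deriv φ t - (2 / m) * c t ^ 2
        + (φ t / α t) * ((4 / m) * c t - deriv α t) = 0) ∧
    (∀ t, 0 < t →
      deriv α t / α t + deriv β t / β t - 4 * φ t / (m * α t ^ 2) ≤ 0) := by
  have hαf : α = fun t => 1 + (2 / 3) * K * t := funext hα
  have hφf : φ = fun t => (m / 2) * (1 / t + K + (1 / 3) * K ^ 2 * t) := funext hφ
  have hβf : β = fun t => Real.sinh (K * t) / Real.cosh (K * t) :=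
    funext fun t => by rw [hβ, Real.tanh_eq_sinh_div_cosh]
  -- derivative of α
  have hα' : ∀ t : ℝ, deriv α t = (2 / 3) * K := by
    intro t
    rw [hαf]
    have h1 : HasDerivAt (fun t : ℝ => 1 + (2 / 3) * K * t) ((2 / 3) * K) t := by
      simpa using (((hasDerivAt_id t).const_mul ((2 / 3) * K)).const_add 1)
    exact h1.deriv
  -- derivative of φ
  have hφ' : ∀ t : ℝ, 0 < t → deriv φ t = (m / 2) * (-(1 / t ^ 2) + (1 / 3) * K ^ 2) := by
    intro t ht
    rw [hφf]
    have h1 : HasDerivAt (fun x : ℝ => 1 / x) (-(1 / t ^ 2)) t := by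
      simpa [one_div] using hasDerivAt_inv ht.ne'
    have h2 : HasDerivAt (fun x : ℝ => (1 / 3) * K ^ 2 * x) ((1 / 3) * K ^ 2) t := by
      simpa using (hasDerivAt_id t).const_mul ((1 / 3) * K ^ 2)
    have h3 : HasDerivAt (fun x : ℝ => (m / 2) * (1 / x + K + (1 / 3) * K ^ 2 * x))
        ((m / 2) * (-(1 / t ^ 2) + (1 / 3) * K ^ 2)) t := by
      simpa using (((h1.add_const K).add h2)).const_mul (m / 2)
    exact h3.deriv
  -- derivative of β
  have hKt : ∀ t : ℝ, HasDerivAt (fun x : ℝ => K * x) K t := by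
    intro t; simpa using (hasDerivAt_id t).const_mul K
  have hβ' : ∀ t : ℝ, deriv β t = K / Real.cosh (K * t) ^ 2 := by
    intro t
    rw [hβf]
    have hs : HasDerivAt (fun x : ℝ => Real.sinh (K * x)) (Real.cosh (K * t) * K) t :=
      (Real.hasDerivAt_sinh (K * t)).comp t (hKt t)
    have hcc : HasDerivAt (fun x : ℝ => Real.cosh (K * x)) (Real.sinh (K * t) * K) t :=
      (Real.hasDerivAt_cosh (K * t)).comp t (hKt t)
    have hcne : Real.cosh (K * t) ≠ 0 := (Real.cosh_pos (K * t)).ne'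
    have hd : deriv (fun x => Real.sinh (K * x) / Real.cosh (K * x)) t = _ :=
      (hs.div hcc hcne).deriv
    rw [hd]
    have hid : Real.cosh (K * t) ^ 2 - Real.sinh (K * t) ^ 2 = 1 :=
      Real.cosh_sq_sub_sinh_sq (K * t)
    field_simp
    nlinarith [hid]
  refine ⟨?_, ?_, ?_⟩
  · intro t ht
    have hA : (0:ℝ) < 1 + (2 / 3) * K * t := by positivity
    rw [hα' t, hc, hα]
    field_simp
    ring
  · intro t ht
    have hA : (0:ℝ) < 1 + (2 / 3) * K * t := by positivity
    rw [hα' t, hφ' t ht, hc, hφ, hα]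
    field_simp
    ring
  · intro t ht
    have hA : (0:ℝ) < 1 + (2 / 3) * K * t := by positivity
    have hS : 0 < Real.sinh (K * t) := Real.sinh_pos_iff.2 (by positivity)
    have hC : 0 < Real.cosh (K * t) := Real.cosh_pos (K * t)
    rw [hα' t, hβ' t, hβ, hφ, hα]
    have htanh : Real.tanh (K * t) = Real.sinh (K * t) / Real.cosh (K * t) :=
      Real.tanh_eq_sinh_div_cosh (K * t)
    rw [htanh]
    have hdiv : (K / Real.cosh (K * t) ^ 2) / (Real.sinh (K * t) / Real.cosh (K * t))
        = K / (Real.sinh (K * t) * Real.cosh (K * t)) := by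
      field_simp
    rw [hdiv]
    -- key lower bound: sinh(s) cosh(s) = sinh(2s)/2 ≥ s + (2/3) s^3 for s = K t
    have hSC : K * t + (2 / 3) * (K * t) ^ 3 ≤ Real.sinh (K * t) * Real.cosh (K * t) := by
      have h2 := sinh_lb (2 * (K * t)) (by positivity)
      have hsm : Real.sinh (2 * (K * t)) = 2 * Real.sinh (K * t) * Real.cosh (K * t) :=
        Real.sinh_two_mul (K * t)
      nlinarith [h2, hsm]
    have hD : (0:ℝ) < K * t + (2 / 3) * (K * t) ^ 3 := by positivity
    have h1 : K / (Real.sinh (K * t) * Real.cosh (K * t))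
        ≤ K / (K * t + (2 / 3) * (K * t) ^ 3) := by
      gcongr
    have h2 : (2 / 3) * K / (1 + (2 / 3) * K * t) + K / (K * t + (2 / 3) * (K * t) ^ 3)
        - 4 * ((m / 2) * (1 / t + K + (1 / 3) * K ^ 2 * t)) / (m * (1 + (2 / 3) * K * t) ^ 2)
        ≤ 0 := by
      have hKey : K / (K * t + (2 / 3) * (K * t) ^ 3) = 1 / (t * (1 + (2/3) * K^2 * t^2)) := by
        rw [div_eq_div_iff hD.ne' (by positivity : (0:ℝ) < t * (1 + (2/3) * K^2 * t^2)).ne']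
        ring
      rw [hKey]
      have hRHS : 4 * ((m / 2) * (1 / t + K + (1 / 3) * K ^ 2 * t))
          / (m * (1 + (2 / 3) * K * t) ^ 2)
          = 2 * (1 + K * t + (1 / 3) * K ^ 2 * t ^ 2)
            / (t * (1 + (2 / 3) * K * t) ^ 2) := by
        field_simp
        ring
      rw [hRHS]
      rw [sub_nonpos, div_add_div _ _ hA.ne' (by positivity : (0:ℝ) < t * (1 + (2/3) * K^2 * t^2)).ne',
        div_le_div_iff₀ (by positivity) (by positivity)]
      have hpos : (0:ℝ) ≤ (1 + (2/3) * K * t) * t *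
          (1 + (10/9) * (K*t) ^ 2 + (8/9) * (K*t) ^ 3 + (4/27) * (K*t) ^ 4) := by positivity
      nlinarith [hpos]
    linarith
end

section
/- Let K ≥ 0, m > 0 and δ ∈ (0,1). Define on (0,∞): γ(t) = δ·e^{−2Kt}, α(t) = 1, β(t) = t, and φ(t) = c(t) = m·e^{2Kt}/(2δt). Then for all t > 0: (i) (4γ(t)/m)·c(t) − 2K·γ(t) − γ′(t) ≥ (γ(t)/α(t))·((4γ(t)/m)·c(t) − α′(t)); (ii) φ′(t) − (2γ(t)/m)·c(t)² + (φ(t)/α(t))·((4γ(t)/m)·c(t) − α′(t)) ≥ 0; (iii) α′(t)/α(t) + β′(t)/β(t) − 4γ(t)·φ(t)/(m·α(t)²) ≤ 0; moreover min(α(t) − γ(t), γ(t)) ≥ min(1 − δ, δ·e^{−2KT}) > 0 on any interval (0,T]. -/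
/-- The Hamilton type solution (7.9) of the A₃-system for the heat equation
under curvature lower bound `-K`: properties of `γ(t) = δ e^{-2Kt}`,
`α(t) = 1`, `β(t) = t`, `φ(t) = c(t) = m e^{2Kt}/(2δt)`. -/
theorem stmt_19 (K m δ : ℝ) (hK : 0 ≤ K) (hm : 0 < m)
    (hδ0 : 0 < δ) (hδ1 : δ < 1)
    (γ α β φ c : ℝ → ℝ)
    (hγ : ∀ t, γ t = δ * Real.exp (-2 * K * t))
    (hα : ∀ t, α t = 1)
    (hβ : ∀ t, β t = t)
    (hφ : ∀ t, φ t = m * Real.exp (2 * K * t) / (2 * δ * t))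
    (hc : ∀ t, c t = m * Real.exp (2 * K * t) / (2 * δ * t)) :
    (∀ t, 0 < t →
      (4 * γ t / m) * c t - 2 * K * γ t - deriv γ t ≥
        (γ t / α t) * ((4 * γ t / m) * c t - deriv α t)) ∧
    (∀ t, 0 < t →
      deriv φ t - (2 * γ t / m) * c t ^ 2
        + (φ t / α t) * ((4 * γ t / m) * c t - deriv α t) ≥ 0) ∧
    (∀ t, 0 < t →
      deriv α t / α t + deriv β t / β t - 4 * γ t * φ t / (m * α t ^ 2) ≤ 0) ∧
    (∀ T, 0 < T →
      0 < min (1 - δ) (δ * Real.exp (-2 * K * T)) ∧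
      ∀ t ∈ Set.Ioc 0 T,
        min (α t - γ t) (γ t) ≥ min (1 - δ) (δ * Real.exp (-2 * K * T))) := by
  have hγf : γ = fun t => δ * Real.exp (-2 * K * t) := funext hγ
  have hαf : α = fun _ => (1 : ℝ) := funext hα
  have hβf : β = fun t => t := funext hβ
  have hφf : φ = fun t => m * Real.exp (2 * K * t) / (2 * δ * t) := funext hφ
  -- derivatives
  have hdγ : ∀ t : ℝ, deriv γ t = δ * (Real.exp (-2 * K * t) * (-2 * K)) := by
    intro t
    rw [hγf]
    have h1 : HasDerivAt (fun t : ℝ => -2 * K * t) (-2 * K) t := by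
      simpa using (hasDerivAt_id t).const_mul (-2 * K)
    exact ((h1.exp).const_mul δ).deriv
  have hdα : ∀ t : ℝ, deriv α t = 0 := by
    intro t; rw [hαf]; simp
  have hdβ : ∀ t : ℝ, deriv β t = 1 := by
    intro t; rw [hβf]; simp
  have hdφ : ∀ t : ℝ, 0 < t → deriv φ t =
      (m * (Real.exp (2 * K * t) * (2 * K)) * (2 * δ * t)
        - m * Real.exp (2 * K * t) * (2 * δ)) / (2 * δ * t) ^ 2 := by
    intro t ht
    rw [hφf]
    have h1 : HasDerivAt (fun t : ℝ => 2 * K * t) (2 * K) t := by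
      simpa using (hasDerivAt_id t).const_mul (2 * K)
    have hnum : HasDerivAt (fun t : ℝ => m * Real.exp (2 * K * t))
        (m * (Real.exp (2 * K * t) * (2 * K))) t := (h1.exp).const_mul m
    have hden : HasDerivAt (fun t : ℝ => 2 * δ * t) (2 * δ) t := by
      simpa using (hasDerivAt_id t).const_mul (2 * δ)
    have hne : 2 * δ * t ≠ 0 := by positivity
    exact (hnum.div hden hne).deriv
  have hAB : ∀ t : ℝ, Real.exp (-2 * K * t) * Real.exp (2 * K * t) = 1 := by
    intro t
    rw [← Real.exp_add]
    norm_num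
  refine ⟨?_, ?_, ?_, ?_⟩
  · intro t ht
    rw [hγ, hα, hc, hdγ, hdα]
    have hA := Real.exp_pos (-2 * K * t)
    have hB := Real.exp_pos (2 * K * t)
    have h1 : Real.exp (-2 * K * t) ≤ 1 := by
      apply Real.exp_le_one_iff.mpr
      nlinarith
    have h2 := hAB t
    set A := Real.exp (-2 * K * t) with hA'
    set B := Real.exp (2 * K * t) with hB'
    rw [ge_iff_le, div_one]
    have hδA : δ * A ≤ 1 := by nlinarith
    field_simp
    have hB1 : 1 ≤ B := by nlinarith [mul_nonneg hB.le (sub_nonneg.mpr h1)]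
    have h3 : δ * (A * B) = δ := by rw [h2, mul_one]
    have hp : (0:ℝ) < 4 * (δ * A) * (m * B) * (m * (2 * δ * t)) := by positivity
    nlinarith [mul_nonneg (sub_nonneg.mpr hδA) hp.le, hB1, h3]
  · intro t ht
    rw [hγ, hα, hc, hφ, hdα, hdφ t ht]
    have hA := Real.exp_pos (-2 * K * t)
    have hB := Real.exp_pos (2 * K * t)
    have h2 := hAB t
    set A := Real.exp (-2 * K * t) with hA'
    set B := Real.exp (2 * K * t) with hB'
    have key : (m * (B * (2 * K)) * (2 * δ * t)
        - m * B * (2 * δ)) / (2 * δ * t) ^ 2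
        - (2 * (δ * A) / m) * (m * B / (2 * δ * t)) ^ 2
        + (m * B / (2 * δ * t) / 1) *
          ((4 * (δ * A) / m) * (m * B / (2 * δ * t)) - 0)
        = m * B * K / (δ * t) := by
      have hA1 : A = B⁻¹ := eq_inv_of_mul_eq_one_left h2
      rw [hA1]
      field_simp
      ring
    rw [ge_iff_le, key]
    positivity
  · intro t ht
    rw [hγ, hα, hφ, hβ, hdα, hdβ]
    have hA := Real.exp_pos (-2 * K * t)
    have hB := Real.exp_pos (2 * K * t)
    have h2 := hAB t
    set A := Real.exp (-2 * K * t) with hA'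
    set B := Real.exp (2 * K * t) with hB'
    have key : (0 : ℝ) / 1 + 1 / t
        - 4 * (δ * A) * (m * B / (2 * δ * t)) / (m * 1 ^ 2)
        = -(1 / t) := by
      have hA1 : A = B⁻¹ := eq_inv_of_mul_eq_one_left h2
      rw [hA1]
      field_simp
      ring
    rw [key]
    have h3 : (0:ℝ) < 1 / t := by positivity
    linarith
  · intro T hT
    constructor
    · apply lt_min
      · linarith
      · positivity
    · rintro t ⟨ht0, htT⟩
      rw [hγ, hα]
      have h1 : Real.exp (-2 * K * t) ≤ 1 := by
        apply Real.exp_le_one_iff.mpr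
        nlinarith
      have h2 : Real.exp (-2 * K * T) ≤ Real.exp (-2 * K * t) := by
        apply Real.exp_le_exp.mpr
        nlinarith
      apply le_min
      · exact le_trans (min_le_left _ _) (by nlinarith [Real.exp_pos (-2 * K * t)])
      · exact le_trans (min_le_right _ _) (by nlinarith)
end
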